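/- arXiv:1807.02806 — 4 statements merged into one kernel-verified Lean document; each statement's English description precedes it below -/
import Mathlib

section
/- For n ≥ 1, the polynomial B^{++}_n(x) = Σ_{k=0}^{n-1} B^{++}(n,k) x^k is gamma-nonnegative; precisely, B^{++}_n(x) = Σ_{s=0}^{⌊(n-1)/2⌋} b^{++}(n,s) x^s (1+x)^{n-1-2s}, where b^{++}(n,s) is the number of σ ∈ B_n with σ_1 > 0, σ_n > 0, exactly s descents, and exactly s+1 slides. -/
open Finset Polynomial

/-- A signed permutation in the hyperoctahedral group `B_n`: a bijection of
`{±1,…,±n}` with `σ(-i) = -σ(i)`, encoded by its values on `1,…,n`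
(extended by `0` elsewhere). -/
structure SignedPerm (n : ℕ) where
  toFun : ℕ → ℤ
  mem_abs : ∀ i ∈ Finset.Icc 1 n, (toFun i).natAbs ∈ Finset.Icc 1 n
  inj_abs : ∀ i ∈ Finset.Icc 1 n, ∀ j ∈ Finset.Icc 1 n,
      (toFun i).natAbs = (toFun j).natAbs → i = j
  eq_zero : ∀ i, i ∉ Finset.Icc 1 n → toFun i = 0

/-- The extended word `σ_0 σ_1 ⋯ σ_n σ_{n+1}` with `σ_0 = 0` and
`σ_{n+1} = -∞` (modeled by `-(n+1)`, which is smaller than every entry). -/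
def word {n : ℕ} (σ : SignedPerm n) (i : ℕ) : ℤ :=
  if i ≤ n then σ.toFun i else -(n + 1 : ℤ)

/-- The number of type-B descents: `|{i ∈ [0,n-1] : σ_i > σ_{i+1}}|`, `σ_0 = 0`. -/
def desB {n : ℕ} (σ : SignedPerm n) : ℕ :=
  ((Finset.range n).filter (fun i => word σ (i + 1) < word σ i)).card

/-- `a` is the starting position of a slide of `σ`, i.e. of a maximal
decreasing run of length at least 2 in the extended word. -/
def IsSlideStart {n : ℕ} (σ : SignedPerm n) (a : ℕ) : Prop :=
  a ≤ n ∧ (a = 0 ∨ word σ (a - 1) < word σ a) ∧ word σ (a + 1) < word σ a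

/-- The number of slides of `σ` (maximal decreasing runs of length ≥ 2 in the
extended word), counted via their starting positions. -/
def slides {n : ℕ} (σ : SignedPerm n) : ℕ :=
  ((Finset.range (n + 1)).filter (fun a =>
      (a = 0 ∨ word σ (a - 1) < word σ a) ∧ word σ (a + 1) < word σ a)).card

/-- `B^+(n,j,r)`: the number of `σ ∈ B_n` with `σ_n > 0`, `σ_1 = j` and
exactly `r` type-B descents (`j`, `r` integers; the count is `0` for `r < 0`). -/
noncomputable def BP (n : ℕ) (j r : ℤ) : ℕ :=
  Nat.card {σ : SignedPerm n // 0 < σ.toFun n ∧ σ.toFun 1 = j ∧ (desB σ : ℤ) = r}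

/-- `B^{++}(n,k)`: number of `σ ∈ B_n` with `σ_1 > 0`, `σ_n > 0`, `k` descents. -/
noncomputable def BPP (n k : ℕ) : ℕ :=
  Nat.card {σ : SignedPerm n // 0 < σ.toFun 1 ∧ 0 < σ.toFun n ∧ desB σ = k}

/-- `B^{-+}(n,k)`: number of `σ ∈ B_n` with `σ_1 < 0`, `σ_n > 0`, `k` descents. -/
noncomputable def BMP (n k : ℕ) : ℕ :=
  Nat.card {σ : SignedPerm n // σ.toFun 1 < 0 ∧ 0 < σ.toFun n ∧ desB σ = k}

/-- `b^{++}(n,k,s)`: number of `σ ∈ B_n` with `σ_1 > 0`, `σ_n > 0`,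
`k` descents and `s+1` slides. -/
noncomputable def bPP (n k s : ℕ) : ℕ :=
  Nat.card {σ : SignedPerm n //
    0 < σ.toFun 1 ∧ 0 < σ.toFun n ∧ desB σ = k ∧ slides σ = s + 1}

/-- `b^{-+}(n,k,s)`: number of `σ ∈ B_n` with `σ_1 < 0`, `σ_n > 0`,
`k` descents and `s+1` slides. -/
noncomputable def bMP (n k s : ℕ) : ℕ :=
  Nat.card {σ : SignedPerm n //
    σ.toFun 1 < 0 ∧ 0 < σ.toFun n ∧ desB σ = k ∧ slides σ = s + 1}

/-- Number of `σ ∈ B_n` with `σ_n > 0` and `k` descents. -/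
noncomputable def BplusCount (n k : ℕ) : ℕ :=
  Nat.card {σ : SignedPerm n // 0 < σ.toFun n ∧ desB σ = k}

/-- Number of `σ ∈ B_n` with `k` descents. -/
noncomputable def Ball (n k : ℕ) : ℕ := Nat.card {σ : SignedPerm n // desB σ = k}

/-- The `j`-Eulerian polynomial of type `B^+`: `B^+_{n,j}(t) = Σ_r B^+(n,j,r) t^r`. -/
noncomputable def BPpoly (n : ℕ) (j : ℤ) : Polynomial ℤ :=
  ∑ r ∈ Finset.range (n + 1), Polynomial.C (BP n j (r : ℤ) : ℤ) * Polynomial.X ^ r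

/-- The type-B Eulerian polynomial `B_n(t) = Σ_{σ ∈ B_n} t^{des_B σ}`. -/
noncomputable def Bfullpoly (n : ℕ) : Polynomial ℤ :=
  ∑ k ∈ Finset.range (n + 1), Polynomial.C (Ball n k : ℤ) * Polynomial.X ^ k

/-- The symmetrized `j`-Eulerian polynomial `𝔹^+_{n,j}(t)`. -/
noncomputable def BsymPoly (n j : ℕ) : Polynomial ℤ :=
  if 2 * j = n + 1 then BPpoly n (j : ℤ)
  else BPpoly n (j : ℤ) + BPpoly n ((n : ℤ) + 1 - j)



namespace Gamma7
open Finset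

variable {n : ℕ}

lemma toFun_zero (σ : SignedPerm n) : σ.toFun 0 = 0 :=
  σ.eq_zero 0 (by simp)

lemma word_zero (σ : SignedPerm n) : word σ 0 = 0 := by
  simp [word, toFun_zero]

lemma word_eq (σ : SignedPerm n) {i : ℕ} (h : i ≤ n) : word σ i = σ.toFun i := by
  simp [word, h]

lemma word_gt (σ : SignedPerm n) {i : ℕ} (h : n < i) : word σ i = -(n + 1 : ℤ) := by
  rw [word, if_neg (by omega)]

lemma word_abs_le (σ : SignedPerm n) {i : ℕ} (h : i ≤ n) : (word σ i).natAbs ≤ n := by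
  rw [word_eq σ h]
  rcases Nat.eq_zero_or_pos i with h0 | h1
  · subst h0; simp [toFun_zero]
  · have := σ.mem_abs i (by simp [Finset.mem_Icc]; omega)
    simp [Finset.mem_Icc] at this; exact this.2

lemma word_lb (σ : SignedPerm n) {i : ℕ} (h : i ≤ n) : -(n + 1 : ℤ) < word σ i := by
  have := word_abs_le σ h
  have h2 : (word σ i).natAbs ≤ n := this
  omega

lemma word_inj (σ : SignedPerm n) {i j : ℕ} (hi : i ≤ n) (hj : j ≤ n)
    (h : word σ i = word σ j) : i = j := by
  rw [word_eq σ hi, word_eq σ hj] at h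
  rcases Nat.eq_zero_or_pos i with h0 | h1
  · subst h0
    rcases Nat.eq_zero_or_pos j with h0' | h1'
    · omega
    · exfalso
      have := σ.mem_abs j (by simp [Finset.mem_Icc]; omega)
      rw [← h, toFun_zero] at this
      simp [Finset.mem_Icc] at this
  · rcases Nat.eq_zero_or_pos j with h0' | h1'
    · exfalso; subst h0'
      have := σ.mem_abs i (by simp [Finset.mem_Icc]; omega)
      rw [h, toFun_zero] at this
      simp [Finset.mem_Icc] at this
    · exact σ.inj_abs i (by simp [Finset.mem_Icc]; omega) j (by simp [Finset.mem_Icc]; omega)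
        (by rw [h])

lemma word_ne (σ : SignedPerm n) {i j : ℕ} (hi : i ≤ n) (hj : j ≤ n) (h : i ≠ j) :
    word σ i ≠ word σ j := fun he => h (word_inj σ hi hj he)

/-- `dsc σ i` : descent at position `i` of the extended word. -/
def dsc (σ : SignedPerm n) (i : ℕ) : Prop := word σ (i + 1) < word σ i

instance (σ : SignedPerm n) (i : ℕ) : Decidable (dsc σ i) := by unfold dsc; infer_instance

lemma dsc_last (σ : SignedPerm n) : dsc σ n := by
  unfold dsc
  rw [word_gt σ (by omega)]
  exact word_lb σ (le_refl n)

lemma desB_eq (σ : SignedPerm n) :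
    desB σ = ((Finset.range n).filter (fun i => dsc σ i)).card := rfl

lemma not_dsc_iff (σ : SignedPerm n) {i : ℕ} (hi : i + 1 ≤ n) :
    ¬ dsc σ i ↔ word σ i < word σ (i + 1) := by
  unfold dsc
  have := word_ne σ (by omega : i ≤ n) hi (by omega)
  constructor
  · intro h; omega
  · intro h; omega

/-- `x` occurs as a value of `σ`. -/
def HasVal (σ : SignedPerm n) (x : ℤ) : Prop := ∃ i, (1 ≤ i ∧ i ≤ n) ∧ σ.toFun i = x

open scoped Classical in
/-- position of the value `x` in `σ` (junk `0` if absent). -/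
noncomputable def pos (σ : SignedPerm n) (x : ℤ) : ℕ :=
  if h : HasVal σ x then h.choose else 0

lemma pos_spec {σ : SignedPerm n} {x : ℤ} (h : HasVal σ x) :
    (1 ≤ pos σ x ∧ pos σ x ≤ n) ∧ σ.toFun (pos σ x) = x := by
  classical
  rw [pos]
  rw [dif_pos h]
  exact h.choose_spec

lemma toFun_inj (σ : SignedPerm n) {i j : ℕ} (hi : i ≤ n) (hj : j ≤ n)
    (h : σ.toFun i = σ.toFun j) : i = j :=
  word_inj σ hi hj (by rw [word_eq σ hi, word_eq σ hj, h])

lemma pos_unique {σ : SignedPerm n} {x : ℤ} {i : ℕ} (h1 : 1 ≤ i) (h2 : i ≤ n)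
    (h : σ.toFun i = x) : pos σ x = i := by
  have hv : HasVal σ x := ⟨i, ⟨h1, h2⟩, h⟩
  have := pos_spec hv
  exact toFun_inj σ this.1.2 h2 (this.2.trans h.symm)

lemma word_pos {σ : SignedPerm n} {x : ℤ} (h : HasVal σ x) : word σ (pos σ x) = x := by
  have := pos_spec h
  rw [word_eq σ this.1.2]; exact this.2

/-- the reindexing cycle used to move the letter at position `i` to position `t`. -/
def cyc (i t : ℕ) : ℕ → ℕ := fun j =>
  if j = t then i
  else if i ≤ j ∧ j < t then j + 1
  else if t < j ∧ j ≤ i then j - 1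
  else j

lemma cyc_invol (i t j : ℕ) : cyc i t (cyc t i j) = j := by
  unfold cyc
  split_ifs <;> omega

lemma cyc_fix {i t j : ℕ} (h : j < min i t ∨ max i t < j) : cyc i t j = j := by
  unfold cyc; split_ifs <;> omega

lemma cyc_in {i t : ℕ} (hi : 1 ≤ i) (hi' : i ≤ n) (ht : 1 ≤ t) (ht' : t ≤ n)
    {j : ℕ} (h1 : 1 ≤ j) (h2 : j ≤ n) : 1 ≤ cyc i t j ∧ cyc i t j ≤ n := by
  unfold cyc; split_ifs <;> omega

lemma cyc_out {i t : ℕ} (hi : 1 ≤ i) (hi' : i ≤ n) (ht : 1 ≤ t) (ht' : t ≤ n)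
    {j : ℕ} (h : ¬(1 ≤ j ∧ j ≤ n)) : cyc i t j = j := by
  unfold cyc; split_ifs <;> omega

/-- move the letter at position `i` to position `t` (identity if out of range). -/
def move (σ : SignedPerm n) (i t : ℕ) : SignedPerm n :=
  if h : 1 ≤ i ∧ i ≤ n ∧ 1 ≤ t ∧ t ≤ n then
    { toFun := fun j => σ.toFun (cyc i t j)
      mem_abs := by
        intro j hj
        simp only [Finset.mem_Icc] at hj
        have := cyc_in h.1 h.2.1 h.2.2.1 h.2.2.2 hj.1 hj.2
        exact σ.mem_abs _ (by simp [Finset.mem_Icc]; exact this)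
      inj_abs := by
        intro j hj k hk he
        simp only [Finset.mem_Icc] at hj hk
        have hj' := cyc_in h.1 h.2.1 h.2.2.1 h.2.2.2 hj.1 hj.2
        have hk' := cyc_in h.1 h.2.1 h.2.2.1 h.2.2.2 hk.1 hk.2
        have := σ.inj_abs _ (by simp [Finset.mem_Icc]; exact hj') _
          (by simp [Finset.mem_Icc]; exact hk') he
        have h2 := congrArg (cyc t i) this
        rwa [cyc_invol, cyc_invol] at h2
      eq_zero := by
        intro j hj
        simp only [Finset.mem_Icc] at hj
        show σ.toFun (cyc i t j) = 0
        rw [cyc_out h.1 h.2.1 h.2.2.1 h.2.2.2 (by omega)]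
        exact σ.eq_zero j (by simp [Finset.mem_Icc]; omega) }
  else σ

lemma move_word (σ : SignedPerm n) {i t : ℕ} (hi : 1 ≤ i) (hi' : i ≤ n)
    (ht : 1 ≤ t) (ht' : t ≤ n) (j : ℕ) :
    word (move σ i t) j = word σ (cyc i t j) := by
  rw [move, dif_pos ⟨hi, hi', ht, ht'⟩]
  have hc : ∀ k, k ≤ n → cyc i t k ≤ n := by
    intro k hk
    rcases Nat.eq_zero_or_pos k with h0 | h1
    · subst h0; rw [cyc_fix (by omega)]; omega
    · exact (cyc_in hi hi' ht ht' h1 hk).2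
  by_cases hj : j ≤ n
  · rw [word_eq _ hj, word_eq _ (hc j hj)]
  · rw [word_gt _ (by omega), cyc_out hi hi' ht ht' (by omega), word_gt _ (by omega)]


lemma cyc_le {i t : ℕ} (hi : 1 ≤ i) (hi' : i ≤ n) (ht : 1 ≤ t) (ht' : t ≤ n)
    {j : ℕ} (h : j ≤ n) : cyc i t j ≤ n := by
  unfold cyc; split_ifs <;> omega

/-- Abstract interface: everything a single hop does to the descent pattern. -/
def HopRel (σ σ' : SignedPerm n) (i t : ℕ) : Prop :=
  1 ≤ i ∧ i ≤ n ∧ 1 ≤ t ∧ t ≤ n ∧ σ' = move σ i t ∧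
  (∀ j, j ≠ t → (dsc σ' j ↔ dsc σ (cyc i t j))) ∧
  (dsc σ' t ↔ ¬ dsc σ i) ∧
  (dsc σ' (t - 1) ↔ ¬ dsc σ (i - 1)) ∧
  (∀ p, 1 ≤ p → p ≤ n → p ≠ i → (dsc σ' (cyc t i p - 1) ↔ dsc σ (p - 1)))

lemma moveRight_hoprel {σ : SignedPerm n} {x : ℤ} {i m : ℕ}
    (hi1 : 1 ≤ i) (hin : i ≤ n) (hx : word σ i = x)
    (him : i < m) (hmn : m ≤ n + 1)
    (hnb : x < word σ (i + 1) ↔ 0 < x)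
    (hblock : ∀ j, i < j → j < m → (x < word σ j ↔ 0 < x))
    (hfar : x < word σ m ↔ ¬ 0 < x)
    (hleft : x < word σ (i - 1) ↔ ¬ 0 < x) :
    HopRel σ (move σ i (m - 1)) i (m - 1) := by
  have hne : ∀ j, j ≠ i → word σ j ≠ x := by
    intro j hj
    by_cases h : j ≤ n
    · rw [← hx]; exact word_ne σ h hin hj
    · rw [word_gt σ (by omega)]
      have := word_lb σ hin; rw [hx] at this; omega
  have him2 : i + 1 < m := by
    by_contra h
    have hm : m = i + 1 := by omega
    rw [hm] at hfar; omega
  have ht1 : 1 ≤ m - 1 := by omega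
  have htn : m - 1 ≤ n := by omega
  have hw : ∀ j, word (move σ i (m - 1)) j = word σ (cyc i (m - 1) j) :=
    move_word σ hi1 hin ht1 htn
  have hP1 : ∀ j, j ≠ m - 1 → (dsc (move σ i (m - 1)) j ↔ dsc σ (cyc i (m - 1) j)) := by
    intro j hj
    simp only [dsc, hw]
    by_cases hA : j + 1 < i
    · have e1 : cyc i (m - 1) j = j := by simp only [cyc]; split_ifs <;> omega
      have e2 : cyc i (m - 1) (j + 1) = j + 1 := by simp only [cyc]; split_ifs <;> omega
      rw [e1, e2]
    by_cases hB : j + 1 = i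
    · have e1 : cyc i (m - 1) j = j := by simp only [cyc]; split_ifs <;> omega
      have e2 : cyc i (m - 1) (j + 1) = i + 1 := by simp only [cyc]; split_ifs <;> omega
      rw [e1, e2, hB, hx]
      have f1 := hnb
      have f2 := hleft
      have f3 := hne (i + 1) (by omega)
      have f4 : word σ j ≠ x := hne j (by omega)
      have hj' : j = i - 1 := by omega
      rw [hj', ← hx]
      rw [hj'] at f4
      constructor <;> intro <;> omega
    -- now i ≤ j
    have hij : i ≤ j := by omega
    by_cases hC : j < m - 2
    · have e1 : cyc i (m - 1) j = j + 1 := by simp only [cyc]; split_ifs <;> omega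
      have e2 : cyc i (m - 1) (j + 1) = j + 2 := by simp only [cyc]; split_ifs <;> omega
      rw [e1, e2]
    by_cases hD : j = m - 2
    · have e1 : cyc i (m - 1) j = m - 1 := by simp only [cyc]; split_ifs <;> omega
      have e2 : cyc i (m - 1) (j + 1) = i := by simp only [cyc]; split_ifs <;> omega
      have e3 : m - 1 + 1 = m := by omega
      rw [e1, e2, e3, hx]
      have f1 := hblock (m - 1) (by omega) (by omega)
      have f2 := hfar
      have f3 := hne (m - 1) (by omega)
      have f4 := hne m (by omega)
      constructor <;> intro <;> omega
    · have e1 : cyc i (m - 1) j = j := by simp only [cyc]; split_ifs <;> omega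
      have e2 : cyc i (m - 1) (j + 1) = j + 1 := by simp only [cyc]; split_ifs <;> omega
      rw [e1, e2]
  have hP2 : dsc (move σ i (m - 1)) (m - 1) ↔ ¬ dsc σ i := by
    simp only [dsc, hw]
    have e1 : cyc i (m - 1) (m - 1) = i := by simp only [cyc]; split_ifs <;> omega
    have e2 : cyc i (m - 1) (m - 1 + 1) = m := by simp only [cyc]; split_ifs <;> omega
    rw [e1, e2, hx]
    have f1 := hfar
    have f2 := hnb
    have f3 := hne m (by omega)
    have f4 := hne (i + 1) (by omega)
    constructor <;> intro <;> omega
  refine ⟨hi1, hin, ht1, htn, rfl, hP1, hP2, ?_, ?_⟩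
  · -- new left-status of x
    simp only [dsc, hw]
    have e1 : cyc i (m - 1) (m - 1 - 1) = m - 1 := by simp only [cyc]; split_ifs <;> omega
    have e2 : cyc i (m - 1) (m - 1 - 1 + 1) = i := by simp only [cyc]; split_ifs <;> omega
    rw [e1, e2, hx]
    have e3 : i - 1 + 1 = i := by omega
    rw [e3, hx]
    have f1 := hblock (m - 1) (by omega) (by omega)
    have f2 := hleft
    have f3 := hne (m - 1) (by omega)
    have f4 := hne (i - 1) (by omega)
    constructor <;> intro <;> omega
  · -- left-status of every other letter
    intro p hp1 hpn hpi
    by_cases hA : p < i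
    · have e1 : cyc (m - 1) i p = p := by simp only [cyc]; split_ifs <;> omega
      rw [e1]
      have h2 := hP1 (p - 1) (by omega)
      have e2 : cyc i (m - 1) (p - 1) = p - 1 := by simp only [cyc]; split_ifs <;> omega
      rwa [e2] at h2
    by_cases hB : p = i + 1
    · have e1 : cyc (m - 1) i p = i := by simp only [cyc]; split_ifs <;> omega
      rw [e1]
      have h2 := hP1 (i - 1) (by omega)
      have e2 : cyc i (m - 1) (i - 1) = i - 1 := by simp only [cyc]; split_ifs <;> omega
      rw [e2] at h2
      rw [h2, hB]
      simp only [dsc]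
      have e3 : i - 1 + 1 = i := by omega
      have e4 : i + 1 - 1 = i := by omega
      rw [e3, e4, hx]
      have f1 := hleft
      have f2 := hnb
      have f3 := hne (i - 1) (by omega)
      have f4 := hne (i + 1) (by omega)
      constructor <;> intro <;> omega
    by_cases hC : p ≤ m - 1
    · -- i + 1 < p ≤ m - 1
      have e1 : cyc (m - 1) i p = p - 1 := by simp only [cyc]; split_ifs <;> omega
      rw [e1]
      have h2 := hP1 (p - 2) (by omega)
      have e2 : cyc i (m - 1) (p - 2) = p - 1 := by simp only [cyc]; split_ifs <;> omega
      rw [e2] at h2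
      have e3 : p - 1 - 1 = p - 2 := by omega
      rw [e3, h2]
    by_cases hD : p = m
    · have e1 : cyc (m - 1) i p = p := by simp only [cyc]; split_ifs <;> omega
      rw [e1, hD]
      have e3 : m - 1 = m - 1 := rfl
      rw [hP2]
      simp only [dsc]
      have e4 : m - 1 + 1 = m := by omega
      rw [e4, hx]
      have f1 := hnb
      have f2 := hblock (m - 1) (by omega) (by omega)
      have f3 := hfar
      have f4 := hne (i + 1) (by omega)
      have f5 := hne (m - 1) (by omega)
      have f6 := hne m (by omega)
      constructor <;> intro <;> omega
    · -- p > m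
      have e1 : cyc (m - 1) i p = p := by simp only [cyc]; split_ifs <;> omega
      rw [e1]
      have h2 := hP1 (p - 1) (by omega)
      have e2 : cyc i (m - 1) (p - 1) = p - 1 := by simp only [cyc]; split_ifs <;> omega
      rwa [e2] at h2


lemma moveLeft_hoprel {σ : SignedPerm n} {x : ℤ} {i m : ℕ}
    (hi1 : 1 ≤ i) (hin : i ≤ n) (hx : word σ i = x)
    (him : m < i)
    (hnb : x < word σ (i - 1) ↔ 0 < x)
    (hblock : ∀ j, m < j → j < i → (x < word σ j ↔ 0 < x))
    (hfar : x < word σ m ↔ ¬ 0 < x)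
    (hright : x < word σ (i + 1) ↔ ¬ 0 < x) :
    HopRel σ (move σ i (m + 1)) i (m + 1) := by
  have hne : ∀ j, j ≠ i → word σ j ≠ x := by
    intro j hj
    by_cases h : j ≤ n
    · rw [← hx]; exact word_ne σ h hin hj
    · rw [word_gt σ (by omega)]
      have := word_lb σ hin; rw [hx] at this; omega
  have him2 : m + 1 < i := by
    by_contra h
    have hm : m = i - 1 := by omega
    rw [hm] at hfar; omega
  have ht1 : 1 ≤ m + 1 := by omega
  have htn : m + 1 ≤ n := by omega
  have hw : ∀ j, word (move σ i (m + 1)) j = word σ (cyc i (m + 1) j) :=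
    move_word σ hi1 hin ht1 htn
  have hP1 : ∀ j, j ≠ m + 1 → (dsc (move σ i (m + 1)) j ↔ dsc σ (cyc i (m + 1) j)) := by
    intro j hj
    simp only [dsc, hw]
    by_cases hA : j < m
    · have e1 : cyc i (m + 1) j = j := by simp only [cyc]; split_ifs <;> omega
      have e2 : cyc i (m + 1) (j + 1) = j + 1 := by simp only [cyc]; split_ifs <;> omega
      rw [e1, e2]
    by_cases hB : j = m
    · have e1 : cyc i (m + 1) j = j := by simp only [cyc]; split_ifs <;> omega
      have e2 : cyc i (m + 1) (j + 1) = i := by simp only [cyc]; split_ifs <;> omega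
      rw [e1, e2, hB, hx]
      have f1 := hfar
      have f2 := hblock (m + 1) (by omega) (by omega)
      have f3 := hne m (by omega)
      have f4 := hne (m + 1) (by omega)
      constructor <;> intro <;> omega
    by_cases hC : j < i
    · -- m + 1 < j < i
      have e1 : cyc i (m + 1) j = j - 1 := by simp only [cyc]; split_ifs <;> omega
      have e2 : cyc i (m + 1) (j + 1) = j := by simp only [cyc]; split_ifs <;> omega
      have e3 : j - 1 + 1 = j := by omega
      rw [e1, e2, e3]
    by_cases hD : j = i
    · have e1 : cyc i (m + 1) j = i - 1 := by simp only [cyc]; split_ifs <;> omega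
      have e2 : cyc i (m + 1) (j + 1) = i + 1 := by simp only [cyc]; split_ifs <;> omega
      have e3 : i - 1 + 1 = i := by omega
      rw [e1, e2, e3, hx]
      have f1 := hnb
      have f2 := hright
      have f3 := hne (i - 1) (by omega)
      have f4 := hne (i + 1) (by omega)
      constructor <;> intro <;> omega
    · have e1 : cyc i (m + 1) j = j := by simp only [cyc]; split_ifs <;> omega
      have e2 : cyc i (m + 1) (j + 1) = j + 1 := by simp only [cyc]; split_ifs <;> omega
      rw [e1, e2]
  have hP2 : dsc (move σ i (m + 1)) (m + 1) ↔ ¬ dsc σ i := by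
    simp only [dsc, hw]
    have e1 : cyc i (m + 1) (m + 1) = i := by simp only [cyc]; split_ifs <;> omega
    have e2 : cyc i (m + 1) (m + 1 + 1) = m + 1 := by simp only [cyc]; split_ifs <;> omega
    rw [e1, e2, hx]
    have f1 := hblock (m + 1) (by omega) (by omega)
    have f2 := hright
    have f3 := hne (m + 1) (by omega)
    have f4 := hne (i + 1) (by omega)
    constructor <;> intro <;> omega
  refine ⟨hi1, hin, ht1, htn, rfl, hP1, hP2, ?_, ?_⟩
  · simp only [dsc, hw]
    have e0 : m + 1 - 1 = m := by omega
    rw [e0]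
    have e1 : cyc i (m + 1) m = m := by simp only [cyc]; split_ifs <;> omega
    have e2 : cyc i (m + 1) (m + 1) = i := by simp only [cyc]; split_ifs <;> omega
    rw [e1, e2, hx]
    have e3 : i - 1 + 1 = i := by omega
    rw [e3, hx]
    have f1 := hfar
    have f2 := hnb
    have f3 := hne m (by omega)
    have f4 := hne (i - 1) (by omega)
    constructor <;> intro <;> omega
  · intro p hp1 hpn hpi
    by_cases hA : p ≤ m
    · have e1 : cyc (m + 1) i p = p := by simp only [cyc]; split_ifs <;> omega
      rw [e1]
      have h2 := hP1 (p - 1) (by omega)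
      have e2 : cyc i (m + 1) (p - 1) = p - 1 := by simp only [cyc]; split_ifs <;> omega
      rwa [e2] at h2
    by_cases hB : p = m + 1
    · have e1 : cyc (m + 1) i p = p + 1 := by simp only [cyc]; split_ifs <;> omega
      rw [e1]
      have e2 : p + 1 - 1 = m + 1 := by omega
      rw [e2, hP2, hB]
      simp only [dsc]
      have e3 : m + 1 - 1 = m := by omega
      have e4 : m + 1 = m + 1 := rfl
      rw [e3, hx]
      have f1 := hright
      have f2 := hblock (m + 1) (by omega) (by omega)
      have f3 := hfar
      have f4 := hne (i + 1) (by omega)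
      have f5 := hne (m + 1) (by omega)
      have f6 := hne m (by omega)
      constructor <;> intro <;> omega
    by_cases hC : p < i
    · -- m + 1 < p < i
      have e1 : cyc (m + 1) i p = p + 1 := by simp only [cyc]; split_ifs <;> omega
      rw [e1]
      have e2 : p + 1 - 1 = p := by omega
      rw [e2]
      have h2 := hP1 p (by omega)
      have e3 : cyc i (m + 1) p = p - 1 := by simp only [cyc]; split_ifs <;> omega
      rwa [e3] at h2
    by_cases hD : p = i + 1
    · have e1 : cyc (m + 1) i p = p := by simp only [cyc]; split_ifs <;> omega
      rw [e1, hD]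
      have e2 : i + 1 - 1 = i := by omega
      rw [e2]
      have h2 := hP1 i (by omega)
      have e3 : cyc i (m + 1) i = i - 1 := by simp only [cyc]; split_ifs <;> omega
      rw [e3] at h2
      rw [h2]
      simp only [dsc]
      have e4 : i - 1 + 1 = i := by omega
      rw [e4, hx]
      have f1 := hnb
      have f2 := hright
      have f3 := hne (i - 1) (by omega)
      have f4 := hne (i + 1) (by omega)
      constructor <;> intro <;> omega
    · -- p > i + 1
      have e1 : cyc (m + 1) i p = p := by simp only [cyc]; split_ifs <;> omega
      rw [e1]
      have h2 := hP1 (p - 1) (by omega)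
      have e2 : cyc i (m + 1) (p - 1) = p - 1 := by simp only [cyc]; split_ifs <;> omega
      rwa [e2] at h2


lemma move_toFun (σ : SignedPerm n) {i t : ℕ} (hi : 1 ≤ i) (hi' : i ≤ n)
    (ht : 1 ≤ t) (ht' : t ≤ n) (j : ℕ) :
    (move σ i t).toFun j = σ.toFun (cyc i t j) := by
  rw [move, dif_pos ⟨hi, hi', ht, ht'⟩]

lemma cyc_tt (i t : ℕ) : cyc i t t = i := by simp [cyc]

lemma SignedPerm.ext' {σ τ : SignedPerm n} (h : ∀ j, σ.toFun j = τ.toFun j) : σ = τ := by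
  cases σ; cases τ
  simp only [SignedPerm.mk.injEq]
  funext j; exact h j

/-- `x` is a double ascent of `σ`. -/
def IsDA (σ : SignedPerm n) (x : ℤ) : Prop :=
  HasVal σ x ∧ ¬ dsc σ (pos σ x - 1) ∧ ¬ dsc σ (pos σ x)

/-- `x` is a double descent of `σ`. -/
def IsDD (σ : SignedPerm n) (x : ℤ) : Prop :=
  HasVal σ x ∧ dsc σ (pos σ x - 1) ∧ dsc σ (pos σ x)

namespace HopRel

variable {σ σ' : SignedPerm n} {i t : ℕ} {x : ℤ}

lemma bounds (h : HopRel σ σ' i t) : 1 ≤ i ∧ i ≤ n ∧ 1 ≤ t ∧ t ≤ n :=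
  ⟨h.1, h.2.1, h.2.2.1, h.2.2.2.1⟩

lemma toFun_eq (h : HopRel σ σ' i t) (j : ℕ) : σ'.toFun j = σ.toFun (cyc i t j) := by
  rw [h.2.2.2.2.1, move_toFun σ h.1 h.2.1 h.2.2.1 h.2.2.2.1]

lemma toFun_t (h : HopRel σ σ' i t) : σ'.toFun t = σ.toFun i := by
  rw [toFun_eq h t, cyc_tt]

lemma pos_x (h : HopRel σ σ' i t) (hx : σ.toFun i = x) : pos σ' x = t :=
  pos_unique h.2.2.1 h.2.2.2.1 (by rw [toFun_t h, hx])

lemma hasval_x (h : HopRel σ σ' i t) (hx : σ.toFun i = x) : HasVal σ' x :=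
  ⟨t, ⟨h.2.2.1, h.2.2.2.1⟩, by rw [toFun_t h, hx]⟩

lemma hasval_iff (h : HopRel σ σ' i t) {y : ℤ} : HasVal σ' y ↔ HasVal σ y := by
  obtain ⟨hi1, hin, ht1, htn⟩ := h.bounds
  constructor
  · rintro ⟨j, hj, hv⟩
    exact ⟨cyc i t j, cyc_in hi1 hin ht1 htn hj.1 hj.2, by rw [← toFun_eq h j, hv]⟩
  · rintro ⟨p, hp, hv⟩
    refine ⟨cyc t i p, cyc_in ht1 htn hi1 hin hp.1 hp.2, ?_⟩
    rw [toFun_eq h, cyc_invol, hv]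

lemma pos_other (h : HopRel σ σ' i t) {y : ℤ} (hy : HasVal σ y)
    (hne : y ≠ σ.toFun i) : pos σ' y = cyc t i (pos σ y) := by
  obtain ⟨hi1, hin, ht1, htn⟩ := h.bounds
  have hp := pos_spec hy
  have := cyc_in ht1 htn hi1 hin hp.1.1 hp.1.2
  exact pos_unique this.1 this.2 (by rw [toFun_eq h, cyc_invol, hp.2])

lemma status_x (h : HopRel σ σ' i t) (hx : σ.toFun i = x) :
    (IsDA σ' x ↔ IsDD σ x) ∧ (IsDD σ' x ↔ IsDA σ x) := by
  obtain ⟨hi1, hin, ht1, htn, hmv, hP1, hP2, hP3, hP4⟩ := h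
  have hpx : pos σ x = i := pos_unique hi1 hin hx
  have hpx' : pos σ' x = t := pos_x ⟨hi1, hin, ht1, htn, hmv, hP1, hP2, hP3, hP4⟩ hx
  have hv : HasVal σ x := ⟨i, ⟨hi1, hin⟩, hx⟩
  have hv' : HasVal σ' x := hasval_x ⟨hi1, hin, ht1, htn, hmv, hP1, hP2, hP3, hP4⟩ hx
  constructor
  · unfold IsDA IsDD
    rw [hpx, hpx']
    constructor
    · rintro ⟨-, h1, h2⟩
      exact ⟨hv, by rw [hP3] at h1; tauto, by rw [hP2] at h2; tauto⟩
    · rintro ⟨-, h1, h2⟩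
      exact ⟨hv', by rw [hP3]; tauto, by rw [hP2]; tauto⟩
  · unfold IsDA IsDD
    rw [hpx, hpx']
    constructor
    · rintro ⟨-, h1, h2⟩
      exact ⟨hv, by rw [hP3] at h1; tauto, by rw [hP2] at h2; tauto⟩
    · rintro ⟨-, h1, h2⟩
      exact ⟨hv', by rw [hP3]; tauto, by rw [hP2]; tauto⟩

lemma status_other (h : HopRel σ σ' i t) (hx : σ.toFun i = x) {y : ℤ} (hxy : y ≠ x) :
    (IsDA σ' y ↔ IsDA σ y) ∧ (IsDD σ' y ↔ IsDD σ y) := by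
  by_cases hy : HasVal σ y
  · obtain ⟨hi1, hin, ht1, htn, hmv, hP1, hP2, hP3, hP4⟩ := h
    have hh : HopRel σ σ' i t := ⟨hi1, hin, ht1, htn, hmv, hP1, hP2, hP3, hP4⟩
    have hp := pos_spec hy
    set p := pos σ y with hpdef
    have hpi : p ≠ i := fun he => hxy (by rw [← hp.2, he, hx])
    have hpos' : pos σ' y = cyc t i p := pos_other hh hy (fun he => hxy (he.trans hx))
    have hy' : HasVal σ' y := (hasval_iff hh).2 hy
    have hqt : cyc t i p ≠ t := by
      intro he
      have := congrArg (cyc i t) he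
      rw [cyc_invol, cyc_tt] at this
      exact hpi this
    have hq1 : dsc σ' (cyc t i p) ↔ dsc σ p := by
      rw [hP1 _ hqt, cyc_invol]
    have hq2 : dsc σ' (cyc t i p - 1) ↔ dsc σ (p - 1) :=
      hP4 p hp.1.1 hp.1.2 hpi
    unfold IsDA IsDD
    rw [hpos']
    constructor
    · constructor
      · rintro ⟨-, a, b⟩; exact ⟨hy, by rwa [hq2] at a, by rwa [hq1] at b⟩
      · rintro ⟨-, a, b⟩; exact ⟨hy', by rwa [hq2], by rwa [hq1]⟩
    · constructor
      · rintro ⟨-, a, b⟩; exact ⟨hy, by rwa [hq2] at a, by rwa [hq1] at b⟩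
      · rintro ⟨-, a, b⟩; exact ⟨hy', by rwa [hq2], by rwa [hq1]⟩
  · have hy' : ¬ HasVal σ' y := fun hv => hy ((hasval_iff h).1 hv)
    constructor
    · exact ⟨fun a => absurd a.1 hy', fun a => absurd a.1 hy⟩
    · exact ⟨fun a => absurd a.1 hy', fun a => absurd a.1 hy⟩

lemma des_aux (σ : SignedPerm n) :
    ((Finset.range (n + 1)).filter (fun j => dsc σ j)).card = desB σ + 1 := by
  rw [Finset.range_add_one, Finset.filter_insert, if_pos (dsc_last σ)]
  rw [Finset.card_insert_of_notMem (by simp)]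
  rfl

lemma des (h : HopRel σ σ' i t) :
    (¬ dsc σ i → desB σ' = desB σ + 1) ∧ (dsc σ i → desB σ' + 1 = desB σ) := by
  obtain ⟨hi1, hin, ht1, htn, hmv, hP1, hP2, hP3, hP4⟩ := h
  have key : (((Finset.range (n + 1)).filter (fun j => dsc σ' j)).erase t).card
      = (((Finset.range (n + 1)).filter (fun j => dsc σ j)).erase i).card := by
    apply Finset.card_bij' (fun j _ => cyc i t j) (fun p _ => cyc t i p)
    · intro j hj
      simp only [Finset.mem_erase, Finset.mem_filter, Finset.mem_range] at hj ⊢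
      have hjt : j ≠ t := hj.1
      refine ⟨?_, ?_, ?_⟩
      · intro he
        have := congrArg (cyc t i) he
        rw [cyc_invol, cyc_tt] at this
        omega
      · have : cyc i t j ≤ n := cyc_le hi1 hin ht1 htn (by omega)
        omega
      · exact (hP1 j hjt).1 hj.2.2
    · intro p hp
      simp only [Finset.mem_erase, Finset.mem_filter, Finset.mem_range] at hp ⊢
      have hpi : p ≠ i := hp.1
      refine ⟨?_, ?_, ?_⟩
      · intro he
        have := congrArg (cyc i t) he
        rw [cyc_invol, cyc_tt] at this
        omega
      · have : cyc t i p ≤ n := cyc_le ht1 htn hi1 hin (by omega)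
        omega
      · have hqt : cyc t i p ≠ t := by
          intro he
          have := congrArg (cyc i t) he
          rw [cyc_invol, cyc_tt] at this
          omega
        rw [hP1 _ hqt, cyc_invol]
        exact hp.2.2
    · intro j _; rw [cyc_invol]
    · intro p _; rw [cyc_invol]
  have hmem' : t ∈ Finset.range (n + 1) := by simp; omega
  have hmemi : i ∈ Finset.range (n + 1) := by simp; omega
  constructor
  · intro hd
    have ht' : dsc σ' t := hP2.2 hd
    have h1 : (((Finset.range (n + 1)).filter (fun j => dsc σ' j))).card
        = (((Finset.range (n + 1)).filter (fun j => dsc σ' j)).erase t).card + 1 := by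
      rw [Finset.card_erase_of_mem (by simp only [Finset.mem_filter]; exact ⟨hmem', ht'⟩)]
      have : 0 < ((Finset.range (n + 1)).filter (fun j => dsc σ' j)).card :=
        Finset.card_pos.2 ⟨t, by simp only [Finset.mem_filter]; exact ⟨hmem', ht'⟩⟩
      omega
    have h2 : (((Finset.range (n + 1)).filter (fun j => dsc σ j)).erase i)
        = ((Finset.range (n + 1)).filter (fun j => dsc σ j)) := by
      apply Finset.erase_eq_of_notMem
      simp only [Finset.mem_filter]
      tauto
    have h2' := congrArg Finset.card h2
    have e1 := des_aux σ
    have e2 := des_aux σ'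
    omega
  · intro hd
    have ht' : ¬ dsc σ' t := fun hh => (hP2.1 hh) hd
    have h1 : (((Finset.range (n + 1)).filter (fun j => dsc σ' j)).erase t)
        = ((Finset.range (n + 1)).filter (fun j => dsc σ' j)) := by
      apply Finset.erase_eq_of_notMem
      simp only [Finset.mem_filter]
      tauto
    have h2 : (((Finset.range (n + 1)).filter (fun j => dsc σ j))).card
        = (((Finset.range (n + 1)).filter (fun j => dsc σ j)).erase i).card + 1 := by
      rw [Finset.card_erase_of_mem (by simp only [Finset.mem_filter]; exact ⟨hmemi, hd⟩)]
      have : 0 < ((Finset.range (n + 1)).filter (fun j => dsc σ j)).card :=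
        Finset.card_pos.2 ⟨i, by simp only [Finset.mem_filter]; exact ⟨hmemi, hd⟩⟩
      omega
    have h1' := congrArg Finset.card h1
    have e1 := des_aux σ
    have e2 := des_aux σ'
    omega

end HopRel


lemma word_ne_x {σ : SignedPerm n} {x : ℤ} {i : ℕ} (hin : i ≤ n) (hx : word σ i = x) :
    ∀ j, j ≠ i → word σ j ≠ x := by
  intro j hj
  by_cases h : j ≤ n
  · rw [← hx]; exact word_ne σ h hin hj
  · rw [word_gt σ (by omega)]
    have := word_lb σ hin; rw [hx] at this; omega

open scoped Classical in
/-- the valley-hopping involution: moves the free letter `x`. -/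
noncomputable def hop (σ : SignedPerm n) (x : ℤ) : SignedPerm n :=
  if (x < word σ (pos σ x + 1) ↔ 0 < x) then
    if h : ∃ m, pos σ x < m ∧ (x < word σ m ↔ ¬ 0 < x) then
      move σ (pos σ x) (Nat.find h - 1)
    else σ
  else
    move σ (pos σ x) (Nat.findGreatest (fun m => (x < word σ m ↔ ¬ 0 < x)) (pos σ x - 1) + 1)

lemma hop_main {σ : SignedPerm n} {x : ℤ} (hS1 : 0 < σ.toFun 1) (hSn : 0 < σ.toFun n)
    (hfree : IsDA σ x ∨ IsDD σ x) :
    (∃ t, HopRel σ (hop σ x) (pos σ x) t) ∧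
      0 < (hop σ x).toFun 1 ∧ 0 < (hop σ x).toFun n ∧ hop (hop σ x) x = σ := by
  have hv : HasVal σ x := hfree.elim (fun h => h.1) (fun h => h.1)
  obtain ⟨⟨hi1, hin⟩, hxi⟩ := pos_spec hv
  set i := pos σ x with hidef
  have hx : word σ i = x := by rw [word_eq σ hin]; exact hxi
  have hne : ∀ j, j ≠ i → word σ j ≠ x := word_ne_x hin hx
  have hxlb : -(n + 1 : ℤ) < x := by have := word_lb σ hin; rwa [hx] at this
  have hx0 : x ≠ 0 := by
    have := σ.mem_abs i (by simp [Finset.mem_Icc]; omega)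
    simp [Finset.mem_Icc] at this
    rw [hxi] at this; omega
  have h1n : 1 ≤ n := le_trans hi1 hin
  have hw1 : 0 < word σ 1 := by rwa [word_eq σ h1n]
  have hwn : 0 < word σ n := by rwa [word_eq σ (le_refl n)]
  have hfree' : dsc σ (i - 1) ↔ dsc σ i := by
    rcases hfree with h | h
    · exact ⟨fun a => absurd a h.2.1, fun a => absurd a h.2.2⟩
    · exact ⟨fun _ => h.2.2, fun _ => h.2.1⟩
  have hds : dsc σ i ↔ (word σ (i + 1) < x) := by
    unfold dsc; rw [hx]
  have hds' : dsc σ (i - 1) ↔ (x < word σ (i - 1)) := by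
    unfold dsc; rw [show i - 1 + 1 = i by omega, hx]
  by_cases htest : x < word σ (i + 1) ↔ 0 < x
  -- ================= move right =================
  · have hne1 := hne (i + 1) (by omega)
    have hiln : ¬ 0 < x → i < n := by
      intro hxp
      rcases Nat.eq_or_lt_of_le hin with h | h
      · exfalso
        rw [h] at hxi
        rw [hxi] at hSn
        omega
      · exact h
    have hex : ∃ m, i < m ∧ (x < word σ m ↔ ¬ 0 < x) := by
      by_cases hxp : 0 < x
      · refine ⟨n + 1, by omega, ?_⟩
        rw [word_gt σ (by omega)]; omega
      · refine ⟨n, hiln hxp, ?_⟩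
        omega
    have hm_spec := Nat.find_spec hex
    set m := Nat.find hex with hmdef
    have hmn : m ≤ n + 1 := by
      by_cases hxp : 0 < x
      · exact Nat.find_le ⟨by omega, by rw [word_gt σ (by omega)]; omega⟩
      · exact le_trans (Nat.find_le ⟨hiln hxp, by omega⟩) (by omega)
    have hblock : ∀ j, i < j → j < m → (x < word σ j ↔ 0 < x) := by
      intro j h1 h2
      have h3 := Nat.find_min hex h2
      have h4 := hne j (by omega)
      have h5 : ¬ (x < word σ j ↔ ¬ 0 < x) := fun hiff => h3 ⟨h1, hiff⟩
      omega
    have hfar : x < word σ m ↔ ¬ 0 < x := hm_spec.2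
    have hdi : dsc σ i ↔ ¬ 0 < x := by rw [hds]; omega
    have hleft : x < word σ (i - 1) ↔ ¬ 0 < x := by
      rw [← hds', hfree', hdi]
    have him2 : i + 1 < m := by
      by_contra hcc
      have : m = i + 1 := by omega
      rw [this] at hfar
      omega
    have hR := moveRight_hoprel hi1 hin hx hm_spec.1 hmn htest hblock hfar hleft
    have hhop : hop σ x = move σ i (m - 1) := by
      unfold hop
      rw [← hidef, if_pos htest, dif_pos hex, ← hmdef]
    obtain ⟨-, -, ht1, htn, hmv, hP1, hP2, hP3, hP4⟩ := hR
    have hR : HopRel σ (move σ i (m - 1)) i (m - 1) := ⟨hi1, hin, ht1, htn, hmv, hP1, hP2, hP3, hP4⟩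
    rw [hhop]
    have hTF : ∀ j, (move σ i (m - 1)).toFun j = σ.toFun (cyc i (m - 1) j) :=
      move_toFun σ hi1 hin ht1 htn
    have hxpos : 0 < x → True := fun _ => trivial
    refine ⟨⟨m - 1, hR⟩, ?_, ?_, ?_⟩
    · -- first entry positive
      rw [hTF 1]
      by_cases hii : i = 1
      · have e : cyc i (m - 1) 1 = 2 := by simp only [cyc]; split_ifs <;> omega
        rw [e]
        have hb2 := hblock 2 (by omega) (by omega)
        have hxp : 0 < x := by rw [hii] at hxi; rw [hxi] at hS1; omega
        have h2n : (2 : ℕ) ≤ n := by omega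
        have := word_eq σ h2n
        omega
      · have e : cyc i (m - 1) 1 = 1 := by simp only [cyc]; split_ifs <;> omega
        rw [e]; exact hS1
    · -- last entry positive
      rw [hTF n]
      by_cases hmm : m - 1 = n
      · have e : cyc i (m - 1) n = i := by simp only [cyc]; split_ifs <;> omega
        rw [e, hxi]
        have : m = n + 1 := by omega
        rw [this, word_gt σ (by omega)] at hfar
        omega
      · have e : cyc i (m - 1) n = n := by simp only [cyc]; split_ifs <;> omega
        rw [e]; exact hSn
    · -- involution
      have hpx' : pos (move σ i (m - 1)) x = m - 1 := hR.pos_x hxi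
      have hw' : ∀ j, word (move σ i (m - 1)) j = word σ (cyc i (m - 1) j) :=
        move_word σ hi1 hin ht1 htn
      have hc1 : word (move σ i (m - 1)) (m - 1 + 1) = word σ m := by
        rw [hw']
        have e : cyc i (m - 1) (m - 1 + 1) = m - 1 + 1 := by simp only [cyc]; split_ifs <;> omega
        rw [e, show m - 1 + 1 = m by omega]
      have hnem := hne m (by omega)
      have htest' : ¬ (x < word (move σ i (m - 1)) (m - 1 + 1) ↔ 0 < x) := by
        rw [hc1]; omega
      unfold hop
      rw [hpx', if_neg htest']
      have hfg : Nat.findGreatest (fun j => (x < word (move σ i (m - 1)) j ↔ ¬ 0 < x))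
          (m - 1 - 1) = i - 1 := by
        rw [Nat.findGreatest_eq_iff]
        refine ⟨by omega, fun _ => ?_, ?_⟩
        · have e : cyc i (m - 1) (i - 1) = i - 1 := by simp only [cyc]; split_ifs <;> omega
          simp only [hw', e]
          exact hleft
        · intro j hj1 hj2 hP
          have hji : i ≤ j := by omega
          have e : cyc i (m - 1) j = j + 1 := by simp only [cyc]; split_ifs <;> omega
          rw [hw', e] at hP
          have hb := hblock (j + 1) (by omega) (by omega)
          have := hne (j + 1) (by omega)
          omega
      rw [hfg, show i - 1 + 1 = i by omega]
      apply SignedPerm.ext'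
      intro j
      rw [move_toFun _ ht1 htn hi1 hin, hTF, cyc_invol]
  -- ================= move left =================
  · have hne1 := hne (i + 1) (by omega)
    have hright : x < word σ (i + 1) ↔ ¬ 0 < x := by omega
    set m := Nat.findGreatest (fun j => (x < word σ j ↔ ¬ 0 < x)) (i - 1) with hmdef
    have hm_le : m ≤ i - 1 := Nat.findGreatest_le _
    have hP0 : x < word σ 0 ↔ ¬ 0 < x := by rw [word_zero]; omega
    have hm_spec : x < word σ m ↔ ¬ 0 < x := by
      rw [hmdef]
      exact Nat.findGreatest_spec (P := fun j => (x < word σ j ↔ ¬ 0 < x)) (Nat.zero_le _) hP0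
    have hblock : ∀ j, m < j → j < i → (x < word σ j ↔ 0 < x) := by
      intro j h1 h2
      have h3 : ¬ (x < word σ j ↔ ¬ 0 < x) := Nat.findGreatest_is_greatest h1 (by omega)
      have h4 := hne j (by omega)
      omega
    have hdi : dsc σ i ↔ 0 < x := by rw [hds]; omega
    have hnb : x < word σ (i - 1) ↔ 0 < x := by
      rw [← hds', hfree', hdi]
    have him : m < i := by omega
    have hnei1 := hne (i - 1) (by omega)
    have him2 : m + 1 < i := by
      by_contra hcc
      have hmi : m = i - 1 := by omega
      rw [hmi] at hm_spec
      omega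
    have hL := moveLeft_hoprel hi1 hin hx him hnb hblock hm_spec hright
    have hhop : hop σ x = move σ i (m + 1) := by
      unfold hop
      rw [← hidef, if_neg htest, ← hmdef]
    obtain ⟨-, -, ht1, htn, hmv, hP1, hP2, hP3, hP4⟩ := hL
    have hL : HopRel σ (move σ i (m + 1)) i (m + 1) := ⟨hi1, hin, ht1, htn, hmv, hP1, hP2, hP3, hP4⟩
    rw [hhop]
    have hTF : ∀ j, (move σ i (m + 1)).toFun j = σ.toFun (cyc i (m + 1) j) :=
      move_toFun σ hi1 hin ht1 htn
    refine ⟨⟨m + 1, hL⟩, ?_, ?_, ?_⟩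
    · rw [hTF 1]
      by_cases hm0 : m = 0
      · have hxp : 0 < x := by
          by_contra hxp
          have hi2 : 2 ≤ i := by
            rcases Nat.eq_or_lt_of_le hi1 with h | h
            · exfalso; rw [← h] at hxi; rw [hxi] at hS1; omega
            · omega
          have hP1' : x < word σ 1 ↔ ¬ 0 < x := by omega
          have : 1 ≤ m := Nat.le_findGreatest (by omega) hP1'
          omega
        have e : cyc i (m + 1) 1 = i := by simp only [cyc]; split_ifs <;> omega
        rw [e, hxi]; omega
      · have e : cyc i (m + 1) 1 = 1 := by simp only [cyc]; split_ifs <;> omega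
        rw [e]; exact hS1
    · rw [hTF n]
      by_cases hii : i = n
      · have e : cyc i (m + 1) n = n - 1 := by simp only [cyc]; split_ifs <;> omega
        rw [e]
        have hb := hblock (n - 1) (by omega) (by omega)
        have hxp : 0 < x := by rw [hii] at hxi; rw [hxi] at hSn; omega
        have := word_eq σ (show n - 1 ≤ n by omega)
        omega
      · have e : cyc i (m + 1) n = n := by simp only [cyc]; split_ifs <;> omega
        rw [e]; exact hSn
    · -- involution
      have hpx' : pos (move σ i (m + 1)) x = m + 1 := hL.pos_x hxi
      have hw' : ∀ j, word (move σ i (m + 1)) j = word σ (cyc i (m + 1) j) :=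
        move_word σ hi1 hin ht1 htn
      have hc1 : word (move σ i (m + 1)) (m + 1 + 1) = word σ (m + 1) := by
        rw [hw']
        have e : cyc i (m + 1) (m + 1 + 1) = m + 1 := by simp only [cyc]; split_ifs <;> omega
        rw [e]
      have hbm1 := hblock (m + 1) (by omega) (by omega)
      have htest' : x < word (move σ i (m + 1)) (m + 1 + 1) ↔ 0 < x := by
        rw [hc1]; exact hbm1
      unfold hop
      rw [hpx', if_pos htest']
      have hex' : ∃ m', m + 1 < m' ∧ (x < word (move σ i (m + 1)) m' ↔ ¬ 0 < x) := by
        refine ⟨i + 1, by omega, ?_⟩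
        have e : cyc i (m + 1) (i + 1) = i + 1 := by simp only [cyc]; split_ifs <;> omega
        rw [hw', e]
        exact hright
      rw [dif_pos hex']
      have hfind : Nat.find hex' = i + 1 := by
        rw [Nat.find_eq_iff]
        constructor
        · refine ⟨by omega, ?_⟩
          have e : cyc i (m + 1) (i + 1) = i + 1 := by simp only [cyc]; split_ifs <;> omega
          rw [hw', e]
          exact hright
        · intro j hj
          intro hcon
          obtain ⟨hj1, hj2⟩ := hcon
          have hji : j ≤ i := by omega
          have e : cyc i (m + 1) j = j - 1 := by simp only [cyc]; split_ifs <;> omega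
          rw [hw', e] at hj2
          have hb := hblock (j - 1) (by omega) (by omega)
          have := hne (j - 1) (by omega)
          omega
      rw [hfind, show i + 1 - 1 = i from rfl]
      apply SignedPerm.ext'
      intro j
      rw [move_toFun _ ht1 htn hi1 hin, hTF, cyc_invol]


instance : Finite (SignedPerm n) := by
  let f : SignedPerm n → (Finset.Icc 1 n → Finset.Icc (-(n:ℤ)) (n:ℤ)) := fun σ i =>
    ⟨σ.toFun i, by
      have := σ.mem_abs i.1 i.2
      simp only [Finset.mem_Icc] at this ⊢
      omega⟩
  have hf : Function.Injective f := by
    intro σ τ h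
    apply SignedPerm.ext'
    intro j
    by_cases hj : j ∈ Finset.Icc 1 n
    · have := congrFun h ⟨j, hj⟩
      simpa [f, Subtype.ext_iff] using this
    · rw [σ.eq_zero j hj, τ.eq_zero j hj]
  exact Finite.of_injective f hf

noncomputable instance : Fintype (SignedPerm n) := Fintype.ofFinite _

lemma hasval_bound {σ : SignedPerm n} {x : ℤ} (h : HasVal σ x) :
    -(n:ℤ) ≤ x ∧ x ≤ n ∧ x ≠ 0 := by
  obtain ⟨i, hi, hv⟩ := h
  have := σ.mem_abs i (by simp [Finset.mem_Icc]; omega)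
  rw [hv] at this
  simp only [Finset.mem_Icc] at this
  omega

open scoped Classical in
/-- the set of double-descent values. -/
noncomputable def DDset (σ : SignedPerm n) : Finset ℤ :=
  (Finset.Icc (-(n:ℤ)) n).filter (fun x => IsDD σ x)

open scoped Classical in
/-- the set of double-ascent values. -/
noncomputable def DAset (σ : SignedPerm n) : Finset ℤ :=
  (Finset.Icc (-(n:ℤ)) n).filter (fun x => IsDA σ x)

lemma mem_DDset {σ : SignedPerm n} {x : ℤ} : x ∈ DDset σ ↔ IsDD σ x := by
  classical
  simp only [DDset, Finset.mem_filter, Finset.mem_Icc]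
  refine ⟨fun h => h.2, fun h => ⟨?_, h⟩⟩
  have := hasval_bound h.1
  omega

lemma mem_DAset {σ : SignedPerm n} {x : ℤ} : x ∈ DAset σ ↔ IsDA σ x := by
  classical
  simp only [DAset, Finset.mem_filter, Finset.mem_Icc]
  refine ⟨fun h => h.2, fun h => ⟨?_, h⟩⟩
  have := hasval_bound h.1
  omega

lemma da_dd_exclusive {σ : SignedPerm n} {x : ℤ} (h1 : IsDA σ x) (h2 : IsDD σ x) : False :=
  h1.2.1 h2.2.1

/-- consequences of one hop. -/
lemma hop_step {σ : SignedPerm n} {x : ℤ} (hS1 : 0 < σ.toFun 1) (hSn : 0 < σ.toFun n)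
    (hfree : IsDA σ x ∨ IsDD σ x) :
    (0 < (hop σ x).toFun 1 ∧ 0 < (hop σ x).toFun n) ∧
    (IsDA σ x → IsDD (hop σ x) x ∧ desB (hop σ x) = desB σ + 1) ∧
    (IsDD σ x → IsDA (hop σ x) x ∧ desB (hop σ x) + 1 = desB σ) ∧
    (∀ y, y ≠ x → (IsDA (hop σ x) y ↔ IsDA σ y) ∧ (IsDD (hop σ x) y ↔ IsDD σ y)) ∧
    hop (hop σ x) x = σ := by
  obtain ⟨⟨t, hR⟩, h1, hn, hinv⟩ := hop_main hS1 hSn hfree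
  have hv : HasVal σ x := hfree.elim (fun h => h.1) (fun h => h.1)
  have hxi : σ.toFun (pos σ x) = x := (pos_spec hv).2
  have hst := hR.status_x hxi
  have hdes := hR.des
  refine ⟨⟨h1, hn⟩, ?_, ?_, ?_, hinv⟩
  · intro hda
    refine ⟨hst.2.2 hda, hdes.1 hda.2.2⟩
  · intro hdd
    refine ⟨hst.1.2 hdd, hdes.2 hdd.2.2⟩
  · intro y hy
    exact hR.status_other hxi hy

/-- iterate hops along a list of values. -/
noncomputable def hops (σ : SignedPerm n) : List ℤ → SignedPerm n
  | [] => σ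
  | x :: l => hops (hop σ x) l

lemma hops_append (σ : SignedPerm n) (l1 l2 : List ℤ) :
    hops σ (l1 ++ l2) = hops (hops σ l1) l2 := by
  induction l1 generalizing σ with
  | nil => rfl
  | cons x l ih => simp only [List.cons_append, hops]; exact ih _

/-- normalizing a list of double descents. -/
lemma hops_specDD (l : List ℤ) : ∀ σ : SignedPerm n, 0 < σ.toFun 1 → 0 < σ.toFun n →
    l.Nodup → (∀ x ∈ l, IsDD σ x) →
    (0 < (hops σ l).toFun 1 ∧ 0 < (hops σ l).toFun n) ∧
    (∀ y, IsDD (hops σ l) y ↔ (IsDD σ y ∧ y ∉ l)) ∧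
    (∀ y, IsDA (hops σ l) y ↔ (IsDA σ y ∨ y ∈ l)) ∧
    desB (hops σ l) + l.length = desB σ ∧
    hops (hops σ l) l.reverse = σ := by
  induction l with
  | nil =>
    intro σ h1 h2 _ _
    exact ⟨⟨h1, h2⟩, fun y => by simp [hops], fun y => by simp [hops], by simp [hops], by simp [hops]⟩
  | cons x l ih =>
    intro σ h1 h2 hnd hall
    have hddx : IsDD σ x := hall x (by simp)
    have hstep := hop_step h1 h2 (Or.inr hddx)
    obtain ⟨⟨g1, g2⟩, _, hDD, hoth, hinv⟩ := hstep
    obtain ⟨hdax, hdes1⟩ := hDD hddx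
    have hnd' : l.Nodup := (List.nodup_cons.1 hnd).2
    have hxl : x ∉ l := (List.nodup_cons.1 hnd).1
    have hall' : ∀ z ∈ l, IsDD (hop σ x) z := by
      intro z hz
      have hzx : z ≠ x := fun he => hxl (he ▸ hz)
      exact ((hoth z hzx).2).2 (hall z (by simp [hz]))
    obtain ⟨⟨k1, k2⟩, kDD, kDA, kdes, kinv⟩ := ih (hop σ x) g1 g2 hnd' hall'
    have hopseq : hops σ (x :: l) = hops (hop σ x) l := rfl
    refine ⟨⟨by rwa [hopseq], by rwa [hopseq]⟩, ?_, ?_, ?_, ?_⟩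
    · intro y
      rw [hopseq, kDD y]
      by_cases hyx : y = x
      · subst hyx
        simp only [List.mem_cons, true_or, not_true_eq_false]
        constructor
        · rintro ⟨hdd, hyl⟩
          exact (da_dd_exclusive hdax hdd).elim
        · tauto
      · rw [(hoth y hyx).2]
        simp only [List.mem_cons]
        tauto
    · intro y
      rw [hopseq, kDA y]
      by_cases hyx : y = x
      · subst hyx
        simp only [List.mem_cons, true_or, or_true]
        tauto
      · rw [(hoth y hyx).1]
        simp only [List.mem_cons]
        tauto
    · rw [hopseq]
      simp only [List.length_cons]
      omega
    · rw [hopseq, List.reverse_cons, hops_append, kinv]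
      simp only [hops]
      exact hinv

/-- un-normalizing a list of double ascents. -/
lemma hops_specDA (l : List ℤ) : ∀ σ : SignedPerm n, 0 < σ.toFun 1 → 0 < σ.toFun n →
    l.Nodup → (∀ x ∈ l, IsDA σ x) →
    (0 < (hops σ l).toFun 1 ∧ 0 < (hops σ l).toFun n) ∧
    (∀ y, IsDA (hops σ l) y ↔ (IsDA σ y ∧ y ∉ l)) ∧
    (∀ y, IsDD (hops σ l) y ↔ (IsDD σ y ∨ y ∈ l)) ∧
    desB (hops σ l) = desB σ + l.length ∧
    hops (hops σ l) l.reverse = σ := by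
  induction l with
  | nil =>
    intro σ h1 h2 _ _
    exact ⟨⟨h1, h2⟩, fun y => by simp [hops], fun y => by simp [hops], by simp [hops], by simp [hops]⟩
  | cons x l ih =>
    intro σ h1 h2 hnd hall
    have hdax : IsDA σ x := hall x (by simp)
    have hstep := hop_step h1 h2 (Or.inl hdax)
    obtain ⟨⟨g1, g2⟩, hDA, _, hoth, hinv⟩ := hstep
    obtain ⟨hddx, hdes1⟩ := hDA hdax
    have hnd' : l.Nodup := (List.nodup_cons.1 hnd).2
    have hxl : x ∉ l := (List.nodup_cons.1 hnd).1
    have hall' : ∀ z ∈ l, IsDA (hop σ x) z := by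
      intro z hz
      have hzx : z ≠ x := fun he => hxl (he ▸ hz)
      exact ((hoth z hzx).1).2 (hall z (by simp [hz]))
    obtain ⟨⟨k1, k2⟩, kDA, kDD, kdes, kinv⟩ := ih (hop σ x) g1 g2 hnd' hall'
    have hopseq : hops σ (x :: l) = hops (hop σ x) l := rfl
    refine ⟨⟨by rwa [hopseq], by rwa [hopseq]⟩, ?_, ?_, ?_, ?_⟩
    · intro y
      rw [hopseq, kDA y]
      by_cases hyx : y = x
      · subst hyx
        simp only [List.mem_cons, true_or, not_true_eq_false]
        constructor
        · rintro ⟨hda, hyl⟩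
          exact (da_dd_exclusive hda hddx).elim
        · tauto
      · rw [(hoth y hyx).1]
        simp only [List.mem_cons]
        tauto
    · intro y
      rw [hopseq, kDD y]
      by_cases hyx : y = x
      · subst hyx
        simp only [List.mem_cons, true_or, or_true]
        tauto
      · rw [(hoth y hyx).2]
        simp only [List.mem_cons]
        tauto
    · rw [hopseq]
      simp only [List.length_cons]
      omega
    · rw [hopseq, List.reverse_cons, hops_append, kinv]
      simp only [hops]
      exact hinv


lemma alt_count (d : ℕ → Prop) [DecidablePred d] (N : ℕ) :
    ((Finset.Icc 1 N).filter (fun a => ¬ d (a - 1) ∧ d a)).card + (if d 0 then 1 else 0)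
    = ((Finset.Icc 1 N).filter (fun a => d (a - 1) ∧ ¬ d a)).card + (if d N then 1 else 0) := by
  induction N with
  | zero => simp
  | succ N ih =>
    have hins : Finset.Icc 1 (N + 1) = insert (N + 1) (Finset.Icc 1 N) := by
      ext a; simp only [Finset.mem_Icc, Finset.mem_insert]; omega
    have hnm1 : (N + 1) ∉ (Finset.Icc 1 N).filter (fun a => ¬ d (a - 1) ∧ d a) := by
      simp [Finset.mem_Icc]
    have hnm2 : (N + 1) ∉ (Finset.Icc 1 N).filter (fun a => d (a - 1) ∧ ¬ d a) := by
      simp [Finset.mem_Icc]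
    rw [hins, Finset.filter_insert, Finset.filter_insert]
    simp only [Nat.add_sub_cancel]
    by_cases h1 : d N <;> by_cases h2 : d (N + 1)
    · rw [if_neg (show ¬(¬d N ∧ d (N + 1)) by tauto),
        if_neg (show ¬(d N ∧ ¬d (N + 1)) by tauto), if_pos h2]
      rw [if_pos h1] at ih
      omega
    · rw [if_neg (show ¬(¬d N ∧ d (N + 1)) by tauto),
        if_pos (show d N ∧ ¬d (N + 1) from ⟨h1, h2⟩),
        Finset.card_insert_of_notMem hnm2, if_neg h2]
      rw [if_pos h1] at ih
      omega
    · rw [if_pos (show ¬d N ∧ d (N + 1) from ⟨h1, h2⟩),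
        if_neg (show ¬(d N ∧ ¬d (N + 1)) by tauto),
        Finset.card_insert_of_notMem hnm1, if_pos h2]
      rw [if_neg h1] at ih
      omega
    · rw [if_neg (show ¬(¬d N ∧ d (N + 1)) by tauto),
        if_neg (show ¬(d N ∧ ¬d (N + 1)) by tauto), if_neg h2]
      rw [if_neg h1] at ih
      omega

open scoped Classical in
lemma card_DDset_eq (σ : SignedPerm n) :
    (DDset σ).card = ((Finset.Icc 1 n).filter (fun a => dsc σ (a - 1) ∧ dsc σ a)).card := by
  apply Finset.card_bij (fun x _ => pos σ x)
  · intro x hx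
    rw [mem_DDset] at hx
    obtain ⟨hv, h1, h2⟩ := hx
    have := (pos_spec hv).1
    simp only [Finset.mem_filter, Finset.mem_Icc]
    exact ⟨⟨this.1, this.2⟩, h1, h2⟩
  · intro x hx y hy he
    rw [mem_DDset] at hx hy
    have hx' := (pos_spec hx.1).2
    have hy' := (pos_spec hy.1).2
    rw [← hx', ← hy', he]
  · intro a ha
    simp only [Finset.mem_filter, Finset.mem_Icc] at ha
    have hp : pos σ (σ.toFun a) = a := pos_unique ha.1.1 ha.1.2 rfl
    refine ⟨σ.toFun a, ?_, hp⟩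
    rw [mem_DDset]
    exact ⟨⟨a, ⟨ha.1.1, ha.1.2⟩, rfl⟩, by rw [hp]; exact ha.2.1, by rw [hp]; exact ha.2.2⟩

open scoped Classical in
lemma card_DAset_eq (σ : SignedPerm n) :
    (DAset σ).card = ((Finset.Icc 1 n).filter (fun a => ¬ dsc σ (a - 1) ∧ ¬ dsc σ a)).card := by
  apply Finset.card_bij (fun x _ => pos σ x)
  · intro x hx
    rw [mem_DAset] at hx
    obtain ⟨hv, h1, h2⟩ := hx
    have := (pos_spec hv).1
    simp only [Finset.mem_filter, Finset.mem_Icc]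
    exact ⟨⟨this.1, this.2⟩, h1, h2⟩
  · intro x hx y hy he
    rw [mem_DAset] at hx hy
    have hx' := (pos_spec hx.1).2
    have hy' := (pos_spec hy.1).2
    rw [← hx', ← hy', he]
  · intro a ha
    simp only [Finset.mem_filter, Finset.mem_Icc] at ha
    have hp : pos σ (σ.toFun a) = a := pos_unique ha.1.1 ha.1.2 rfl
    refine ⟨σ.toFun a, ?_, hp⟩
    rw [mem_DAset]
    exact ⟨⟨a, ⟨ha.1.1, ha.1.2⟩, rfl⟩, by rw [hp]; exact ha.2.1, by rw [hp]; exact ha.2.2⟩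

lemma dsc_zero_iff (σ : SignedPerm n) (h1n : 1 ≤ n) : dsc σ 0 ↔ σ.toFun 1 < 0 := by
  unfold dsc
  rw [word_zero, word_eq σ h1n]

open scoped Classical in
lemma slides_eq_PK (σ : SignedPerm n) (hS1 : 0 < σ.toFun 1) (h1n : 1 ≤ n) :
    slides σ = ((Finset.Icc 1 n).filter (fun a => ¬ dsc σ (a - 1) ∧ dsc σ a)).card := by
  unfold slides
  congr 1
  ext a
  simp only [Finset.mem_filter, Finset.mem_range, Finset.mem_Icc]
  constructor
  · rintro ⟨ha, h1, h2⟩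
    rcases h1 with h1 | h1
    · exfalso
      subst h1
      have : dsc σ 0 := h2
      rw [dsc_zero_iff σ h1n] at this
      omega
    · have ha1 : 1 ≤ a := by
        rcases Nat.eq_zero_or_pos a with h | h
        · exfalso; subst h; simp [word_zero] at h1
        · omega
      refine ⟨⟨ha1, by omega⟩, ?_, h2⟩
      intro hd
      unfold dsc at hd
      rw [show a - 1 + 1 = a by omega] at hd
      omega
  · rintro ⟨⟨ha1, han⟩, h1, h2⟩
    refine ⟨by omega, Or.inr ?_, h2⟩
    have hne := word_ne σ (show a - 1 ≤ n by omega) (show a ≤ n by omega) (by omega)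
    unfold dsc at h1
    rw [show a - 1 + 1 = a by omega] at h1
    omega

open scoped Classical in
lemma stats (σ : SignedPerm n) (hS1 : 0 < σ.toFun 1) (h1n : 1 ≤ n) :
    slides σ + (DDset σ).card = desB σ + 1 ∧
    (DAset σ).card + (DDset σ).card + 2 * slides σ = n + 1 := by
  have hd0 : ¬ dsc σ 0 := by rw [dsc_zero_iff σ h1n]; omega
  have hdn : dsc σ n := dsc_last σ
  have hA : ((Finset.Icc 1 n).filter (fun a => dsc σ a)).card = desB σ + 1 := by
    have he : (Finset.Icc 1 n).filter (fun a => dsc σ a)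
        = (Finset.range (n + 1)).filter (fun a => dsc σ a) := by
      ext a
      simp only [Finset.mem_filter, Finset.mem_Icc, Finset.mem_range]
      constructor
      · rintro ⟨⟨h1, h2⟩, h3⟩; exact ⟨by omega, h3⟩
      · rintro ⟨h1, h3⟩
        refine ⟨⟨?_, by omega⟩, h3⟩
        rcases Nat.eq_zero_or_pos a with h | h
        · exfalso; rw [h] at h3; exact hd0 h3
        · omega
    rw [he, HopRel.des_aux]
  have hsplit1 : ((Finset.Icc 1 n).filter (fun a => ¬ dsc σ (a - 1) ∧ dsc σ a)).card
      + ((Finset.Icc 1 n).filter (fun a => dsc σ (a - 1) ∧ dsc σ a)).card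
      = desB σ + 1 := by
    rw [← hA]
    have e1 : (Finset.Icc 1 n).filter (fun a => ¬ dsc σ (a - 1) ∧ dsc σ a)
        = ((Finset.Icc 1 n).filter (fun a => dsc σ a)).filter (fun a => ¬ dsc σ (a - 1)) := by
      rw [Finset.filter_filter]; apply Finset.filter_congr; intro a _; tauto
    have e2 : (Finset.Icc 1 n).filter (fun a => dsc σ (a - 1) ∧ dsc σ a)
        = ((Finset.Icc 1 n).filter (fun a => dsc σ a)).filter (fun a => dsc σ (a - 1)) := by
      rw [Finset.filter_filter]; apply Finset.filter_congr; intro a _; tauto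
    rw [e1, e2]
    rw [add_comm]
    exact Finset.card_filter_add_card_filter_not _
  have hsplit2 : ((Finset.Icc 1 n).filter (fun a => dsc σ (a - 1) ∧ ¬ dsc σ a)).card
      + ((Finset.Icc 1 n).filter (fun a => ¬ dsc σ (a - 1) ∧ ¬ dsc σ a)).card
      = n - (desB σ + 1) := by
    have hAc : ((Finset.Icc 1 n).filter (fun a => ¬ dsc σ a)).card = n - (desB σ + 1) := by
      have := Finset.card_filter_add_card_filter_not
        (s := Finset.Icc 1 n) (p := fun a => dsc σ a)
      rw [hA] at this
      have hcard : (Finset.Icc 1 n).card = n := by rw [Nat.card_Icc]; omega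
      omega
    rw [← hAc]
    have e1 : (Finset.Icc 1 n).filter (fun a => dsc σ (a - 1) ∧ ¬ dsc σ a)
        = ((Finset.Icc 1 n).filter (fun a => ¬ dsc σ a)).filter (fun a => dsc σ (a - 1)) := by
      rw [Finset.filter_filter]; apply Finset.filter_congr; intro a _; tauto
    have e2 : (Finset.Icc 1 n).filter (fun a => ¬ dsc σ (a - 1) ∧ ¬ dsc σ a)
        = ((Finset.Icc 1 n).filter (fun a => ¬ dsc σ a)).filter (fun a => ¬ dsc σ (a - 1)) := by
      rw [Finset.filter_filter]; apply Finset.filter_congr; intro a _; tauto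
    rw [e1, e2]
    exact Finset.card_filter_add_card_filter_not _
  have halt := alt_count (dsc σ) n
  rw [if_neg hd0, if_pos hdn] at halt
  have hPK := slides_eq_PK σ hS1 h1n
  have hDD := card_DDset_eq σ
  have hDA := card_DAset_eq σ
  have hle : desB σ + 1 ≤ n := by
    rw [← hA]
    calc ((Finset.Icc 1 n).filter (fun a => dsc σ a)).card
        ≤ (Finset.Icc 1 n).card := Finset.card_filter_le _ _
      _ = n := by rw [Nat.card_Icc]; omega
  constructor
  · rw [hPK, hDD]; exact hsplit1
  · rw [hDA, hDD, hPK]; omega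


lemma normalize (σ : SignedPerm n) (h1 : 0 < σ.toFun 1) (h2 : 0 < σ.toFun n) (hn : 1 ≤ n) :
    (0 < (hops σ ((DDset σ).sort (· ≤ ·))).toFun 1 ∧
      0 < (hops σ ((DDset σ).sort (· ≤ ·))).toFun n) ∧
    slides (hops σ ((DDset σ).sort (· ≤ ·))) = desB (hops σ ((DDset σ).sort (· ≤ ·))) + 1 ∧
    DDset σ ⊆ DAset (hops σ ((DDset σ).sort (· ≤ ·))) ∧
    desB (hops σ ((DDset σ).sort (· ≤ ·))) + (DDset σ).card = desB σ ∧
    hops (hops σ ((DDset σ).sort (· ≤ ·))) ((DDset σ).sort (· ≤ ·)).reverse = σ := by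
  set l := (DDset σ).sort (· ≤ ·) with hl
  have hnd : l.Nodup := (DDset σ).sort_nodup _
  have hmem : ∀ x, x ∈ l ↔ IsDD σ x := by
    intro x; rw [hl, Finset.mem_sort, mem_DDset]
  have hall : ∀ x ∈ l, IsDD σ x := fun x hx => (hmem x).1 hx
  obtain ⟨⟨g1, g2⟩, hDD, hDA, hdes, hinv⟩ := hops_specDD l σ h1 h2 hnd hall
  have hDDempty : ∀ y, ¬ IsDD (hops σ l) y := by
    intro y hy
    rw [hDD y] at hy
    exact hy.2 ((hmem y).2 hy.1)
  have hDDe : DDset (hops σ l) = ∅ := by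
    apply Finset.eq_empty_of_forall_notMem
    intro y hy
    exact hDDempty y (mem_DDset.1 hy)
  have hstats := stats (hops σ l) g1 hn
  refine ⟨⟨g1, g2⟩, ?_, ?_, ?_, ?_⟩
  · rw [hDDe] at hstats
    simp only [Finset.card_empty, add_zero] at hstats
    exact hstats.1
  · intro y hy
    rw [mem_DAset]
    rw [hDA y]
    exact Or.inr ((hmem y).2 (mem_DDset.1 hy))
  · rw [← hdes, hl]
    rw [Finset.length_sort]
  · exact hinv

lemma unnormalize (τ : SignedPerm n) (g1 : 0 < τ.toFun 1) (g2 : 0 < τ.toFun n) (hn : 1 ≤ n)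
    (hsl : slides τ = desB τ + 1) (T : Finset ℤ) (hT : T ⊆ DAset τ) :
    (0 < (hops τ ((T.sort (· ≤ ·)).reverse)).toFun 1 ∧
      0 < (hops τ ((T.sort (· ≤ ·)).reverse)).toFun n) ∧
    desB (hops τ ((T.sort (· ≤ ·)).reverse)) = desB τ + T.card ∧
    DDset (hops τ ((T.sort (· ≤ ·)).reverse)) = T ∧
    hops (hops τ ((T.sort (· ≤ ·)).reverse)) (T.sort (· ≤ ·)) = τ := by
  have hDDe : DDset τ = ∅ := by
    have hstats := (stats τ g1 hn).1
    rw [hsl] at hstats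
    have : (DDset τ).card = 0 := by omega
    exact Finset.card_eq_zero.1 this
  have hDDempty : ∀ y, ¬ IsDD τ y := by
    intro y hy
    have : y ∈ DDset τ := mem_DDset.2 hy
    rw [hDDe] at this
    exact absurd this (Finset.notMem_empty y)
  set l := (T.sort (· ≤ ·)).reverse with hl
  have hnd : l.Nodup := List.nodup_reverse.2 (T.sort_nodup _)
  have hmem : ∀ x, x ∈ l ↔ x ∈ T := by
    intro x; rw [hl, List.mem_reverse, Finset.mem_sort]
  have hall : ∀ x ∈ l, IsDA τ x := fun x hx => mem_DAset.1 (hT ((hmem x).1 hx))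
  obtain ⟨⟨k1, k2⟩, kDA, kDD, kdes, kinv⟩ := hops_specDA l τ g1 g2 hnd hall
  refine ⟨⟨k1, k2⟩, ?_, ?_, ?_⟩
  · rw [kdes, hl, List.length_reverse, Finset.length_sort]
  · ext y
    rw [mem_DDset, kDD y, hmem y]
    constructor
    · rintro (h | h)
      · exact absurd h (hDDempty y)
      · exact h
    · exact Or.inr
  · have : l.reverse = T.sort (· ≤ ·) := by rw [hl, List.reverse_reverse]
    rw [← this]
    exact kinv

open scoped Classical in
lemma BPP_eq (k : ℕ) (hn : 1 ≤ n) :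
    BPP n k = ∑ s ∈ Finset.range ((n - 1) / 2 + 1),
      bPP n s s * (if s ≤ k then Nat.choose (n - 1 - 2 * s) (k - s) else 0) := by
  classical
  have hBPP : BPP n k = (Finset.univ.filter
      (fun σ : SignedPerm n => 0 < σ.toFun 1 ∧ 0 < σ.toFun n ∧ desB σ = k)).card := by
    rw [BPP, Nat.card_eq_fintype_card, Fintype.card_subtype]
  have hbPP : ∀ s, bPP n s s = (Finset.univ.filter
      (fun σ : SignedPerm n =>
        0 < σ.toFun 1 ∧ 0 < σ.toFun n ∧ desB σ = s ∧ slides σ = s + 1)).card := by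
    intro s; rw [bPP, Nat.card_eq_fintype_card, Fintype.card_subtype]
  set A := Finset.univ.filter
    (fun σ : SignedPerm n => 0 < σ.toFun 1 ∧ 0 < σ.toFun n ∧ desB σ = k) with hA
  set NB := Finset.univ.filter
    (fun τ : SignedPerm n => 0 < τ.toFun 1 ∧ 0 < τ.toFun n ∧ slides τ = desB τ + 1) with hNB
  set B := NB.sigma
    (fun τ => (DAset τ).powerset.filter (fun T => desB τ + T.card = k)) with hB
  have hcard : A.card = B.card := by
    apply Finset.card_bij'
      (i := fun σ _ => (⟨hops σ ((DDset σ).sort (· ≤ ·)), DDset σ⟩ : Σ _ : SignedPerm n, Finset ℤ))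
      (j := fun p _ => hops p.1 ((p.2.sort (· ≤ ·)).reverse))
    · intro σ hσ
      rw [hA, Finset.mem_filter] at hσ
      obtain ⟨-, h1, h2, h3⟩ := hσ
      obtain ⟨⟨g1, g2⟩, hsl, hsub, hdes, -⟩ := normalize σ h1 h2 hn
      rw [hB, Finset.mem_sigma]
      constructor
      · rw [hNB, Finset.mem_filter]
        exact ⟨Finset.mem_univ _, g1, g2, hsl⟩
      · dsimp only
        rw [Finset.mem_filter, Finset.mem_powerset]
        exact ⟨hsub, by omega⟩
    · intro p hp
      rw [hB, Finset.mem_sigma, hNB, Finset.mem_filter, Finset.mem_filter,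
        Finset.mem_powerset] at hp
      obtain ⟨⟨-, g1, g2, hsl⟩, hsub, hdes⟩ := hp
      obtain ⟨⟨k1, k2⟩, kdes, -, -⟩ := unnormalize p.1 g1 g2 hn hsl p.2 hsub
      rw [hA, Finset.mem_filter]
      exact ⟨Finset.mem_univ _, k1, k2, by omega⟩
    · intro σ hσ
      rw [hA, Finset.mem_filter] at hσ
      obtain ⟨-, h1, h2, h3⟩ := hσ
      obtain ⟨-, -, -, -, hinv⟩ := normalize σ h1 h2 hn
      exact hinv
    · intro p hp
      rw [hB, Finset.mem_sigma, hNB, Finset.mem_filter, Finset.mem_filter,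
        Finset.mem_powerset] at hp
      obtain ⟨⟨-, g1, g2, hsl⟩, hsub, hdes⟩ := hp
      obtain ⟨⟨k1, k2⟩, kdes, kDD, kinv⟩ := unnormalize p.1 g1 g2 hn hsl p.2 hsub
      have : (⟨hops (hops p.1 ((p.2.sort (· ≤ ·)).reverse))
          ((DDset (hops p.1 ((p.2.sort (· ≤ ·)).reverse))).sort (· ≤ ·)),
          DDset (hops p.1 ((p.2.sort (· ≤ ·)).reverse))⟩ : Σ _ : SignedPerm n, Finset ℤ)
          = ⟨p.1, p.2⟩ := by
        rw [kDD, kinv]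
      rw [this]
  have hfiber : ∀ τ ∈ NB, ((DAset τ).powerset.filter (fun T => desB τ + T.card = k)).card
      = (if desB τ ≤ k then Nat.choose (n - 1 - 2 * desB τ) (k - desB τ) else 0) := by
    intro τ hτ
    rw [hNB, Finset.mem_filter] at hτ
    obtain ⟨-, g1, g2, hsl⟩ := hτ
    have hstats := stats τ g1 hn
    have hDAcard : (DAset τ).card = n - 1 - 2 * desB τ := by omega
    by_cases hdk : desB τ ≤ k
    · rw [if_pos hdk]
      have he : (DAset τ).powerset.filter (fun T => desB τ + T.card = k)
          = Finset.powersetCard (k - desB τ) (DAset τ) := by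
        ext T
        rw [Finset.mem_filter, Finset.mem_powerset, Finset.mem_powersetCard]
        constructor
        · rintro ⟨hs, hc⟩; exact ⟨hs, by omega⟩
        · rintro ⟨hs, hc⟩; exact ⟨hs, by omega⟩
      rw [he, Finset.card_powersetCard, hDAcard]
    · rw [if_neg hdk]
      rw [Finset.card_eq_zero]
      apply Finset.filter_false_of_mem
      intro T _
      omega
  have hrange : ∀ τ ∈ NB, desB τ ∈ Finset.range ((n - 1) / 2 + 1) := by
    intro τ hτ
    rw [hNB, Finset.mem_filter] at hτ
    obtain ⟨-, g1, g2, hsl⟩ := hτ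
    have hstats := stats τ g1 hn
    rw [Finset.mem_range]
    omega
  rw [hBPP, hcard, hB, Finset.card_sigma]
  rw [Finset.sum_congr rfl hfiber]
  rw [← Finset.sum_fiberwise_of_maps_to hrange
    (fun τ => if desB τ ≤ k then Nat.choose (n - 1 - 2 * desB τ) (k - desB τ) else 0)]
  apply Finset.sum_congr rfl
  intro s hs
  have hinner : ∀ τ ∈ NB.filter (fun τ => desB τ = s),
      (if desB τ ≤ k then Nat.choose (n - 1 - 2 * desB τ) (k - desB τ) else 0)
      = (if s ≤ k then Nat.choose (n - 1 - 2 * s) (k - s) else 0) := by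
    intro τ hτ
    rw [Finset.mem_filter] at hτ
    rw [hτ.2]
  rw [Finset.sum_congr rfl hinner, Finset.sum_const, smul_eq_mul]
  congr 1
  rw [hbPP s]
  congr 1
  ext τ
  simp only [hNB, Finset.mem_filter, Finset.mem_univ, true_and]
  constructor
  · rintro ⟨⟨g1, g2, hsl⟩, hdes⟩
    exact ⟨g1, g2, hdes, by omega⟩
  · rintro ⟨g1, g2, hdes, hsl⟩
    exact ⟨⟨g1, g2, by omega⟩, hdes⟩


lemma one_add_X_pow (m : ℕ) :
    ((1 : Polynomial ℤ) + Polynomial.X) ^ m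
      = ∑ j ∈ Finset.range (m + 1), Polynomial.C ((m.choose j : ℤ)) * Polynomial.X ^ j := by
  rw [add_comm, add_pow]
  apply Finset.sum_congr rfl
  intro j _
  rw [one_pow, mul_one, Polynomial.C_eq_natCast]
  ring

end Gamma7

/-- Gamma-nonnegativity of `B^{++}_n(x)`:
`B^{++}_n(x) = Σ_{s=0}^{⌊(n-1)/2⌋} b^{++}(n,s) x^s (1+x)^{n-1-2s}`. -/
theorem stmt7 (n : ℕ) (hn : 1 ≤ n) :
    (∑ k ∈ Finset.range n, Polynomial.C (BPP n k : ℤ) * Polynomial.X ^ k) =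
      ∑ s ∈ Finset.range ((n - 1) / 2 + 1),
        Polynomial.C (bPP n s s : ℤ) * Polynomial.X ^ s *
          (1 + Polynomial.X) ^ (n - 1 - 2 * s) := by
  have step1 : ∀ k : ℕ, Polynomial.C (BPP n k : ℤ) * Polynomial.X ^ k
      = ∑ s ∈ Finset.range ((n - 1) / 2 + 1),
          Polynomial.C ((bPP n s s : ℤ) *
            (if s ≤ k then (Nat.choose (n - 1 - 2 * s) (k - s) : ℤ) else 0)) *
            Polynomial.X ^ k := by
    intro k
    rw [Gamma7.BPP_eq k hn, Nat.cast_sum, map_sum, Finset.sum_mul]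
    apply Finset.sum_congr rfl
    intro s _
    congr 2
    push_cast
    by_cases h : s ≤ k <;> simp [h]
  rw [Finset.sum_congr rfl (fun k _ => step1 k), Finset.sum_comm]
  apply Finset.sum_congr rfl
  intro s hs
  rw [Finset.mem_range] at hs
  have h2s : 2 * s + 1 ≤ n := by omega
  rw [Gamma7.one_add_X_pow (n - 1 - 2 * s), Finset.mul_sum]
  have hR : ∀ j, Polynomial.C (bPP n s s : ℤ) * Polynomial.X ^ s *
      (Polynomial.C (((n - 1 - 2 * s).choose j : ℤ)) * Polynomial.X ^ j)
      = Polynomial.C ((bPP n s s : ℤ) * ((n - 1 - 2 * s).choose j : ℤ)) *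
          Polynomial.X ^ (s + j) := by
    intro j
    rw [Polynomial.C_mul, pow_add]
    ring
  rw [Finset.sum_congr rfl (fun j _ => hR j)]
  have hL : ∀ k ∈ Finset.range n, Polynomial.C ((bPP n s s : ℤ) *
      (if s ≤ k then ((n - 1 - 2 * s).choose (k - s) : ℤ) else 0)) * Polynomial.X ^ k
      = if s ≤ k then Polynomial.C ((bPP n s s : ℤ) *
          ((n - 1 - 2 * s).choose (k - s) : ℤ)) * Polynomial.X ^ k else 0 := by
    intro k _
    by_cases h : s ≤ k
    · rw [if_pos h, if_pos h]
    · rw [if_neg h, if_neg h, mul_zero, map_zero, zero_mul]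
  rw [Finset.sum_congr rfl hL, ← Finset.sum_filter]
  have hIco : (Finset.range n).filter (fun k => s ≤ k) = Finset.Ico s n := by
    ext a; simp only [Finset.mem_Ico, Finset.mem_filter, Finset.mem_range]; omega
  rw [hIco, Finset.sum_Ico_eq_sum_range]
  have hsimp : ∀ j, Polynomial.C ((bPP n s s : ℤ) *
        ((n - 1 - 2 * s).choose (s + j - s) : ℤ)) * Polynomial.X ^ (s + j)
      = Polynomial.C ((bPP n s s : ℤ) * ((n - 1 - 2 * s).choose j : ℤ)) *
          Polynomial.X ^ (s + j) := by
    intro j; rw [Nat.add_sub_cancel_left]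
  rw [Finset.sum_congr rfl (fun j _ => hsimp j)]
  symm
  apply Finset.sum_subset
  · apply Finset.range_subset_range.2
    omega
  · intro j hj1 hj2
    rw [Finset.mem_range] at hj1 hj2
    have hc : (n - 1 - 2 * s).choose j = 0 := Nat.choose_eq_zero_of_lt (by omega)
    rw [hc]
    simp
end

section
/- Every signed permutation σ ∈ B_n with σ_1 > 0 and σ_n > 0 has at least 1 slide, and every σ ∈ B_n with σ_1 < 0 and σ_n > 0 has at least 2 slides. -/
open Finset Polynomial

lemma word_zero {n : ℕ} (σ : SignedPerm n) : word σ 0 = 0 := by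
  have h := σ.eq_zero 0 (by simp [Finset.mem_Icc])
  simp [word, h]

lemma word_ne {n : ℕ} (σ : SignedPerm n) {a : ℕ} (ha1 : 1 ≤ a) (han : a ≤ n) :
    word σ (a - 1) ≠ word σ a := by
  have hwa : word σ a = σ.toFun a := by simp [word, han]
  have hamem : a ∈ Finset.Icc 1 n := by simp [Finset.mem_Icc]; omega
  have habs := σ.mem_abs a hamem
  simp only [Finset.mem_Icc] at habs
  rcases Nat.eq_or_lt_of_le ha1 with h1 | h1
  · -- a = 1
    have : word σ (a - 1) = 0 := by
      rw [← h1]; simpa using word_zero σ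
    rw [this, hwa]
    intro h
    omega
  · have ha1' : a - 1 ∈ Finset.Icc 1 n := by simp [Finset.mem_Icc]; omega
    have hw1 : word σ (a - 1) = σ.toFun (a - 1) := by
      simp [word]; intro h; omega
    rw [hw1, hwa]
    intro h
    have := σ.inj_abs (a - 1) ha1' a hamem (by rw [h])
    omega

lemma exists_start {n : ℕ} (σ : SignedPerm n) :
    ∀ b : ℕ, 1 ≤ b → b ≤ n → 0 < word σ b → word σ (b + 1) < word σ b →
    ∃ a, 1 ≤ a ∧ a ≤ n ∧ word σ (a - 1) < word σ a ∧ word σ (a + 1) < word σ a := by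
  intro b
  induction b using Nat.strong_induction_on with
  | _ b ih =>
    intro hb1 hbn hpos hdesc
    by_cases h : word σ (b - 1) < word σ b
    · exact ⟨b, hb1, hbn, h, hdesc⟩
    · have hne := word_ne σ hb1 hbn
      have hgt : word σ b < word σ (b - 1) := by
        rcases lt_trichotomy (word σ (b - 1)) (word σ b) with h' | h' | h'
        · exact absurd h' h
        · exact absurd h' hne
        · exact h'
      have hb2 : 2 ≤ b := by
        rcases Nat.eq_or_lt_of_le hb1 with h1 | h1
        · exfalso
          apply h
          rw [← h1] at hpos ⊢
          simpa [word_zero σ] using hpos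
        · omega
      have hd' : word σ ((b - 1) + 1) < word σ (b - 1) := by
        have : b - 1 + 1 = b := by omega
        rw [this]; exact hgt
      exact ih (b - 1) (by omega) (by omega) (by omega) (lt_trans hpos hgt) hd'

/-- Every `σ ∈ B_n` with `σ_1 > 0`, `σ_n > 0` has at least one slide, and
every `σ ∈ B_n` with `σ_1 < 0`, `σ_n > 0` has at least two slides. -/
theorem stmt9 (n : ℕ) (σ : SignedPerm n) :
    (0 < σ.toFun 1 → 0 < σ.toFun n → 1 ≤ slides σ) ∧
    (σ.toFun 1 < 0 → 0 < σ.toFun n → 2 ≤ slides σ) := by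
  classical
  have hn1 : 0 < σ.toFun n → 1 ≤ n := by
    intro hn
    by_contra h
    push_neg at h
    have := σ.eq_zero n (by simp [Finset.mem_Icc]; omega)
    omega
  have key : 0 < σ.toFun n → ∃ a, 1 ≤ a ∧ a ≤ n ∧
      (a = 0 ∨ word σ (a - 1) < word σ a) ∧ word σ (a + 1) < word σ a := by
    intro hn
    have hn' := hn1 hn
    have hwn : word σ n = σ.toFun n := by simp [word]
    have hdesc : word σ (n + 1) < word σ n := by
      have h1 : word σ (n + 1) = -(n + 1 : ℤ) := by simp [word]
      rw [h1, hwn]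
      omega
    obtain ⟨a, ha1, han, hl, hr⟩ := exists_start σ n hn' le_rfl (by omega) hdesc
    exact ⟨a, ha1, han, Or.inr hl, hr⟩
  constructor
  · intro h1 hn
    obtain ⟨a, ha1, han, hl, hr⟩ := key hn
    apply Finset.card_pos.mpr
    exact ⟨a, Finset.mem_filter.mpr ⟨Finset.mem_range.mpr (by omega), hl, hr⟩⟩
  · intro h1 hn
    obtain ⟨a, ha1, han, hl, hr⟩ := key hn
    have hn' := hn1 hn
    have h0 : (0 = 0 ∨ word σ (0 - 1) < word σ 0) ∧ word σ (0 + 1) < word σ 0 := by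
      refine ⟨Or.inl rfl, ?_⟩
      have hw1 : word σ 1 = σ.toFun 1 := by simp [word]; omega
      rw [word_zero σ, hw1]
      simpa using h1
    apply Finset.one_lt_card.mpr
    exact ⟨0, Finset.mem_filter.mpr ⟨Finset.mem_range.mpr (by omega), h0⟩,
      a, Finset.mem_filter.mpr ⟨Finset.mem_range.mpr (by omega), hl, hr⟩, by omega⟩
end

section
/- For the interval subdivision of the simplex 2^[n], the entries of the f-vector transformation matrix satisfy: for 1 ≤ k ≤ d, (F_d)_{k,l} = Σ_{j=0}^{k-1} (-1)^j C(k-1,j) [(2k-2j)^l - (2k-2j-1)^l], and this number is nonnegative for all 0 ≤ l ≤ d. -/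
open Finset Polynomial

private lemma aux_sum_div2 (k : ℕ) (g : ℕ → ℤ) :
    ∑ v ∈ Finset.range (2 * k), g (v / 2) = 2 * ∑ i ∈ Finset.range k, g i := by
  induction k with
  | zero => simp
  | succ k ih =>
    have h2 : 2 * (k + 1) = (2 * k) + 1 + 1 := by ring
    rw [h2, Finset.sum_range_succ, Finset.sum_range_succ, ih, Finset.sum_range_succ]
    have e1 : (2 * k) / 2 = k := by omega
    have e2 : (2 * k + 1) / 2 = k := by omega
    rw [e1, e2]; ring

private lemma aux_expand (A : Finset ℕ) (x : ℕ → ℤ) :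
    ∏ i ∈ A, (1 - x i) = ∑ T ∈ A.powerset, (-1) ^ T.card * ∏ i ∈ T, x i := by
  calc ∏ i ∈ A, (1 - x i) = ∏ i ∈ A, ((-1) * x i + 1) :=
        Finset.prod_congr rfl fun i _ => by ring
    _ = ∑ T ∈ A.powerset, (∏ i ∈ T, (-1) * x i) * ∏ i ∈ A \ T, 1 :=
        Finset.prod_add _ _ _
    _ = ∑ T ∈ A.powerset, (-1) ^ T.card * ∏ i ∈ T, x i := by
        refine Finset.sum_congr rfl fun T hT => ?_
        rw [Finset.prod_const_one, mul_one, Finset.prod_mul_distrib, Finset.prod_const]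

private lemma aux_fun_sum {l K : ℕ} (G : Fin K → ℤ) :
    ∑ f : Fin l → Fin K, ∏ t, G (f t) = (∑ v : Fin K, G v) ^ l := by
  classical
  rw [← Fintype.piFinset_univ, ← Finset.prod_univ_sum]
  simp


private lemma aux_prodχ (T : Finset ℕ) (n : ℕ) :
    (∏ i ∈ T, (if n / 2 = i then (0:ℤ) else 1)) = if n / 2 ∈ T then 0 else 1 := by
  by_cases h : n / 2 ∈ T
  · rw [if_pos h]
    exact Finset.prod_eq_zero h (by simp)
  · rw [if_neg h]
    apply Finset.prod_eq_one
    intro i hi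
    rw [if_neg]
    intro he; exact h (he ▸ hi)

private lemma aux_sumA (k : ℕ) (T : Finset ℕ) (hT : T ⊆ Finset.range (k - 1)) :
    ∑ v : Fin (2 * k), ∏ i ∈ T, (if (v : ℕ) / 2 = i then (0:ℤ) else 1)
      = 2 * (k : ℤ) - 2 * T.card := by
  have h1 : ∑ v : Fin (2 * k), ∏ i ∈ T, (if (v : ℕ) / 2 = i then (0:ℤ) else 1)
      = ∑ v ∈ Finset.range (2 * k), (if v / 2 ∈ T then (0:ℤ) else 1) := by
    rw [← Fin.sum_univ_eq_sum_range (fun n => if n / 2 ∈ T then (0:ℤ) else 1) (2 * k)]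
    exact Finset.sum_congr rfl fun v _ => aux_prodχ T v
  rw [h1, aux_sum_div2 k (fun i => if i ∈ T then (0:ℤ) else 1)]
  have hTk : T ⊆ Finset.range k := hT.trans (Finset.range_subset_range.mpr (by omega))
  have h2 : ∑ i ∈ Finset.range k, (if i ∈ T then (0:ℤ) else 1)
      = (k : ℤ) - T.card := by
    have : ∀ i ∈ Finset.range k, (if i ∈ T then (0:ℤ) else 1)
        = 1 - (if i ∈ T then (1:ℤ) else 0) := by
      intro i _; split <;> ring
    rw [Finset.sum_congr rfl this, Finset.sum_sub_distrib, Finset.sum_const,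
      Finset.sum_ite_mem, Finset.inter_eq_right.mpr hTk, Finset.sum_const]
    simp [Finset.card_range]
  rw [h2]; ring

private lemma aux_sumB (k : ℕ) (hk : 1 ≤ k) (T : Finset ℕ) (hT : T ⊆ Finset.range (k - 1)) :
    ∑ v : Fin (2 * k), (if (v : ℕ) = 2 * k - 1 then (0:ℤ) else 1) *
        ∏ i ∈ T, (if (v : ℕ) / 2 = i then (0:ℤ) else 1)
      = 2 * (k : ℤ) - 2 * T.card - 1 := by
  have key : ∀ v : Fin (2 * k),
      (if (v : ℕ) = 2 * k - 1 then (0:ℤ) else 1) *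
        ∏ i ∈ T, (if (v : ℕ) / 2 = i then (0:ℤ) else 1)
      = (∏ i ∈ T, (if (v : ℕ) / 2 = i then (0:ℤ) else 1))
        - (if (v : ℕ) = 2 * k - 1 then (1:ℤ) else 0) := by
    intro v
    rw [aux_prodχ]
    by_cases hv : (v : ℕ) = 2 * k - 1
    · have hdiv : (v : ℕ) / 2 = k - 1 := by omega
      have hnot : (v : ℕ) / 2 ∉ T := fun h => by
        have := hT h; rw [Finset.mem_range] at this; omega
      rw [if_pos hv, if_pos hv, if_neg hnot]; ring
    · rw [if_neg hv, if_neg hv]; ring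
  rw [Finset.sum_congr rfl fun v _ => key v, Finset.sum_sub_distrib, aux_sumA k T hT]
  have h3 : ∑ v : Fin (2 * k), (if (v : ℕ) = 2 * k - 1 then (1:ℤ) else 0) = 1 := by
    rw [Fin.sum_univ_eq_sum_range (fun n => if n = 2 * k - 1 then (1:ℤ) else 0) (2 * k),
      Finset.sum_ite_eq' (Finset.range (2 * k))]
    rw [if_pos (Finset.mem_range.mpr (by omega))]
  rw [h3]


/-- The entries `(F_d)_{k,l} = Σ_{j=0}^{k-1} (-1)^j C(k-1,j)[(2k-2j)^l - (2k-2j-1)^l]`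
of the `f`-vector transformation matrix of the interval subdivision are
nonnegative for `1 ≤ k ≤ d` and `0 ≤ l ≤ d`. -/
theorem stmt15 (d k l : ℕ) (hk1 : 1 ≤ k) (hkd : k ≤ d) (hl : l ≤ d) :
    0 ≤ ∑ j ∈ Finset.range k, (-1 : ℤ) ^ j * (Nat.choose (k - 1) j : ℤ) *
        ((2 * (k : ℤ) - 2 * j) ^ l - (2 * (k : ℤ) - 2 * j - 1) ^ l) := by
  classical
  set A : Finset ℕ := Finset.range (k - 1) with hA
  set S : ℤ := ∑ f : Fin l → Fin (2 * k),
      (1 - ∏ t, (if ((f t : ℕ)) = 2 * k - 1 then (0:ℤ) else 1)) *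
        ∏ i ∈ A, (1 - ∏ t, (if ((f t : ℕ)) / 2 = i then (0:ℤ) else 1)) with hS
  have hχ01 : ∀ (i : ℕ) (v : Fin (2 * k)),
      (0:ℤ) ≤ (if ((v : ℕ)) / 2 = i then (0:ℤ) else 1) ∧
      (if ((v : ℕ)) / 2 = i then (0:ℤ) else 1) ≤ 1 := by
    intro i v; split <;> norm_num
  have hψ01 : ∀ (v : Fin (2 * k)),
      (0:ℤ) ≤ (if ((v : ℕ)) = 2 * k - 1 then (0:ℤ) else 1) ∧
      (if ((v : ℕ)) = 2 * k - 1 then (0:ℤ) else 1) ≤ 1 := by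
    intro v; split <;> norm_num
  have hSnn : 0 ≤ S := by
    rw [hS]
    apply Finset.sum_nonneg
    intro f _
    apply mul_nonneg
    · have := Finset.prod_le_one (s := (Finset.univ : Finset (Fin l)))
        (fun t _ => (hψ01 (f t)).1) (fun t _ => (hψ01 (f t)).2)
      linarith
    · apply Finset.prod_nonneg
      intro i _
      have := Finset.prod_le_one (s := (Finset.univ : Finset (Fin l)))
        (fun t _ => (hχ01 i (f t)).1) (fun t _ => (hχ01 i (f t)).2)
      linarith
  have hSeq : S = ∑ j ∈ Finset.range k, (-1 : ℤ) ^ j * (Nat.choose (k - 1) j : ℤ) *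
      ((2 * (k : ℤ) - 2 * j) ^ l - (2 * (k : ℤ) - 2 * j - 1) ^ l) := by
    have step1 : S = ∑ T ∈ A.powerset, (-1 : ℤ) ^ T.card *
        ∑ f : Fin l → Fin (2 * k),
          (1 - ∏ t, (if ((f t : ℕ)) = 2 * k - 1 then (0:ℤ) else 1)) *
            ∏ i ∈ T, ∏ t, (if ((f t : ℕ)) / 2 = i then (0:ℤ) else 1) := by
      rw [hS]
      calc (∑ f : Fin l → Fin (2 * k),
          (1 - ∏ t, (if ((f t : ℕ)) = 2 * k - 1 then (0:ℤ) else 1)) *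
            ∏ i ∈ A, (1 - ∏ t, (if ((f t : ℕ)) / 2 = i then (0:ℤ) else 1)))
          = ∑ f : Fin l → Fin (2 * k), ∑ T ∈ A.powerset, (-1 : ℤ) ^ T.card *
              ((1 - ∏ t, (if ((f t : ℕ)) = 2 * k - 1 then (0:ℤ) else 1)) *
                ∏ i ∈ T, ∏ t, (if ((f t : ℕ)) / 2 = i then (0:ℤ) else 1)) := by
            refine Finset.sum_congr rfl fun f _ => ?_
            rw [aux_expand A (fun i => ∏ t, (if ((f t : ℕ)) / 2 = i then (0:ℤ) else 1)),
              Finset.mul_sum]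
            exact Finset.sum_congr rfl fun T _ => by ring
        _ = _ := by
            rw [Finset.sum_comm]
            exact Finset.sum_congr rfl fun T _ => (Finset.mul_sum _ _ _).symm
    have hinner : ∀ T ∈ A.powerset,
        (∑ f : Fin l → Fin (2 * k),
          (1 - ∏ t, (if ((f t : ℕ)) = 2 * k - 1 then (0:ℤ) else 1)) *
            ∏ i ∈ T, ∏ t, (if ((f t : ℕ)) / 2 = i then (0:ℤ) else 1))
        = (2 * (k : ℤ) - 2 * T.card) ^ l - (2 * (k : ℤ) - 2 * T.card - 1) ^ l := by
      intro T hT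
      rw [Finset.mem_powerset, hA] at hT
      have e1 : ∀ f : Fin l → Fin (2 * k),
          (1 - ∏ t, (if ((f t : ℕ)) = 2 * k - 1 then (0:ℤ) else 1)) *
            ∏ i ∈ T, ∏ t, (if ((f t : ℕ)) / 2 = i then (0:ℤ) else 1)
          = (∏ t, ∏ i ∈ T, (if ((f t : ℕ)) / 2 = i then (0:ℤ) else 1))
            - ∏ t, ((if ((f t : ℕ)) = 2 * k - 1 then (0:ℤ) else 1) *
                ∏ i ∈ T, (if ((f t : ℕ)) / 2 = i then (0:ℤ) else 1)) := by
        intro f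
        rw [Finset.prod_comm, Finset.prod_mul_distrib]
        ring
      rw [Finset.sum_congr rfl fun f _ => e1 f, Finset.sum_sub_distrib,
        aux_fun_sum (fun v : Fin (2 * k) => ∏ i ∈ T, (if ((v : ℕ)) / 2 = i then (0:ℤ) else 1)),
        aux_fun_sum (fun v : Fin (2 * k) => (if ((v : ℕ)) = 2 * k - 1 then (0:ℤ) else 1) *
          ∏ i ∈ T, (if ((v : ℕ)) / 2 = i then (0:ℤ) else 1)),
        aux_sumA k T hT, aux_sumB k hk1 T hT]
    have step2 : (∑ T ∈ A.powerset, (-1 : ℤ) ^ T.card *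
        ∑ f : Fin l → Fin (2 * k),
          (1 - ∏ t, (if ((f t : ℕ)) = 2 * k - 1 then (0:ℤ) else 1)) *
            ∏ i ∈ T, ∏ t, (if ((f t : ℕ)) / 2 = i then (0:ℤ) else 1))
        = ∑ T ∈ A.powerset, (-1 : ℤ) ^ T.card *
            ((2 * (k : ℤ) - 2 * T.card) ^ l - (2 * (k : ℤ) - 2 * T.card - 1) ^ l) :=
      Finset.sum_congr rfl fun T hT =>
        congrArg (fun x => (-1 : ℤ) ^ T.card * x) (hinner T hT)
    rw [step1, step2, Finset.sum_powerset]
    have hcard : A.card = k - 1 := by rw [hA, Finset.card_range]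
    have hrange : A.card + 1 = k := by rw [hcard]; exact Nat.succ_pred_eq_of_pos hk1
    rw [hrange]
    refine Finset.sum_congr rfl fun j hj => ?_
    have hconst : ∀ T ∈ Finset.powersetCard j A,
        (-1 : ℤ) ^ T.card * ((2 * (k : ℤ) - 2 * T.card) ^ l -
          (2 * (k : ℤ) - 2 * T.card - 1) ^ l)
        = (-1 : ℤ) ^ j * ((2 * (k : ℤ) - 2 * j) ^ l - (2 * (k : ℤ) - 2 * j - 1) ^ l) := by
      intro T hT
      rw [(Finset.mem_powersetCard.mp hT).2]
    rw [Finset.sum_congr rfl hconst, Finset.sum_const, Finset.card_powersetCard,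
      hcard, nsmul_eq_mul]
    ring
  rw [← hSeq]; exact hSnn
end

section
/- For 1 ≤ j < (n+1)/2, the polynomial B̃^+_{n,j}(t) := t·B^+_{n,j}(t) + B^+_{n,n-j+1}(t) is symmetric of degree n with center of symmetry at ⌊n/2⌋, i.e., its coefficient of t^k equals its coefficient of t^{n-k} for all k. -/
open Finset Polynomial

/-! ### Auxiliary material for the symmetry theorem -/

section Aux

/-- The value complementation `v ↦ sign(v)·(n+1) - v`. -/
def dd (n : ℕ) (v : ℤ) : ℤ := Int.sign v * (n + 1) - v

lemma dd_of_pos {n : ℕ} {v : ℤ} (h : 0 < v) : dd n v = (n : ℤ) + 1 - v := by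
  simp [dd, Int.sign_eq_one_iff_pos.mpr h]

lemma dd_of_neg {n : ℕ} {v : ℤ} (h : v < 0) : dd n v = -((n : ℤ) + 1) - v := by
  simp only [dd, Int.sign_eq_neg_one_iff_neg.mpr h]
  ring

lemma dd_zero (n : ℕ) : dd n 0 = 0 := by simp [dd]

lemma sigma_bounds {n : ℕ} (σ : SignedPerm n) {i : ℕ} (hi : i ∈ Finset.Icc 1 n) :
    1 ≤ (σ.toFun i).natAbs ∧ (σ.toFun i).natAbs ≤ n := by
  have := σ.mem_abs i hi
  simpa using this

lemma dd_natAbs {n : ℕ} {v : ℤ} (h1 : 1 ≤ v.natAbs) (h2 : v.natAbs ≤ n) :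
    (dd n v).natAbs = n + 1 - v.natAbs := by
  rcases lt_trichotomy v 0 with h | h | h
  · rw [dd_of_neg h]; omega
  · omega
  · rw [dd_of_pos h]; omega

lemma dd_dd {n : ℕ} {v : ℤ} (h2 : v.natAbs ≤ n) : dd n (dd n v) = v := by
  rcases lt_trichotomy v 0 with h | h | h
  · rw [dd_of_neg h, dd_of_neg (by omega)]; ring
  · simp [h, dd_zero]
  · rw [dd_of_pos h, dd_of_pos (by omega)]; ring

/-- The descent-complementing involution on signed permutations. -/
def dPerm {n : ℕ} (σ : SignedPerm n) : SignedPerm n where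
  toFun i := dd n (σ.toFun i)
  mem_abs i hi := by
    obtain ⟨h1, h2⟩ := sigma_bounds σ hi
    rw [dd_natAbs h1 h2]
    rw [Finset.mem_Icc]; omega
  inj_abs i hi j hj h := by
    obtain ⟨h1, h2⟩ := sigma_bounds σ hi
    obtain ⟨h3, h4⟩ := sigma_bounds σ hj
    apply σ.inj_abs i hi j hj
    rw [dd_natAbs h1 h2, dd_natAbs h3 h4] at h
    omega
  eq_zero i hi := by show dd n (σ.toFun i) = 0; rw [σ.eq_zero i hi, dd_zero]

lemma SignedPerm.ext' {n : ℕ} {σ τ : SignedPerm n} (h : σ.toFun = τ.toFun) : σ = τ := by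
  cases σ; cases τ; simpa using h

lemma dPerm_dPerm {n : ℕ} (σ : SignedPerm n) : dPerm (dPerm σ) = σ := by
  apply SignedPerm.ext'
  funext i
  show dd n (dd n (σ.toFun i)) = σ.toFun i
  by_cases hi : i ∈ Finset.Icc 1 n
  · exact dd_dd (sigma_bounds σ hi).2
  · rw [σ.eq_zero i hi, dd_zero, dd_zero]

lemma word_eq {n : ℕ} (σ : SignedPerm n) {i : ℕ} (hi : i ≤ n) :
    word σ i = σ.toFun i := by simp [word, hi]

lemma word_dPerm {n : ℕ} (σ : SignedPerm n) {i : ℕ} (hi : i ≤ n) :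
    word (dPerm σ) i = dd n (σ.toFun i) := by
  rw [word_eq _ hi]; rfl

lemma desB_eq_sum {n : ℕ} (σ : SignedPerm n) :
    (desB σ : ℤ) = ∑ i ∈ Finset.range n, (if word σ (i + 1) < word σ i then (1 : ℤ) else 0) := by
  rw [desB, Finset.card_filter]
  push_cast [apply_ite]
  rfl

/-- Key counting lemma: `dPerm` complements descents. -/
lemma key {n : ℕ} (σ : SignedPerm n) (hn1 : 1 ≤ n)
    (h1 : 0 < σ.toFun 1) (hn : 0 < σ.toFun n) :
    desB σ + desB (dPerm σ) = n - 1 := by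
  obtain ⟨m, rfl⟩ : ∃ m, n = m + 1 := ⟨n - 1, by omega⟩
  set g : ℕ → ℤ := fun i => if 0 < σ.toFun i then 1 else 0 with hg
  have main : (desB σ : ℤ) + (desB (dPerm σ) : ℤ) = m := by
    rw [desB_eq_sum, desB_eq_sum, ← Finset.sum_add_distrib, Finset.sum_range_succ']
    have h0 : ((if word σ (0 + 1) < word σ 0 then (1:ℤ) else 0) +
        if word (dPerm σ) (0 + 1) < word (dPerm σ) 0 then (1:ℤ) else 0) = 0 := by
      have e1 : word σ 1 = σ.toFun 1 := word_eq σ (by omega)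
      have e2 : word (dPerm σ) 1 = dd (m+1) (σ.toFun 1) := word_dPerm σ (by omega)
      have hb := sigma_bounds σ (i := 1) (Finset.mem_Icc.mpr (by omega))
      rw [word_zero, word_zero, e1, e2, dd_of_pos h1]
      have : ¬ (σ.toFun 1 < 0) := by omega
      rw [if_neg (by omega), if_neg (by push_cast; omega)]
      ring
    rw [h0, add_zero]
    have step : ∀ i ∈ Finset.range m,
        ((if word σ (i + 1 + 1) < word σ (i + 1) then (1:ℤ) else 0) +
         if word (dPerm σ) (i + 1 + 1) < word (dPerm σ) (i + 1) then (1:ℤ) else 0)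
        = 1 + (g (i+1) - g (i+2)) := by
      intro i hi
      rw [Finset.mem_range] at hi
      have hi1 : i + 1 ≤ m + 1 := by omega
      have hi2 : i + 2 ≤ m + 1 := by omega
      have m1 : (i+1) ∈ Finset.Icc 1 (m+1) := Finset.mem_Icc.mpr (by omega)
      have m2 : (i+2) ∈ Finset.Icc 1 (m+1) := Finset.mem_Icc.mpr (by omega)
      have hb1 := sigma_bounds σ m1
      have hb2 := sigma_bounds σ m2
      have hne : (σ.toFun (i+1)).natAbs ≠ (σ.toFun (i+2)).natAbs := by
        intro h
        have := σ.inj_abs _ m1 _ m2 h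
        omega
      rw [word_eq σ hi2, word_eq σ hi1, word_dPerm σ hi2, word_dPerm σ hi1]
      show _ = 1 + ((if 0 < σ.toFun (i+1) then (1:ℤ) else 0)
        - (if 0 < σ.toFun (i+2) then (1:ℤ) else 0))
      set x := σ.toFun (i+1) with hx
      set y := σ.toFun (i+2) with hy
      rcases lt_trichotomy x 0 with hxs | hxs | hxs <;>
        rcases lt_trichotomy y 0 with hys | hys | hys
      · rw [dd_of_neg hxs, dd_of_neg hys]; split_ifs <;> omega
      · omega
      · rw [dd_of_neg hxs, dd_of_pos hys]; split_ifs <;> push_cast <;> omega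
      all_goals first
        | omega
        | (rw [dd_of_pos hxs, dd_of_neg hys]; split_ifs <;> push_cast <;> omega)
        | (rw [dd_of_pos hxs, dd_of_pos hys]; split_ifs <;> omega)
    rw [Finset.sum_congr rfl step, Finset.sum_add_distrib, Finset.sum_const,
      Finset.sum_range_sub' (fun i => g (i+1)) m]
    have g1 : g (0 + 1) = 1 := by simp [hg, h1]
    have gn : g (m + 1) = 1 := by simp [hg, hn]
    rw [g1, gn]
    simp
  omega

lemma BP_symm (n : ℕ) (j : ℤ) (hj1 : 1 ≤ j) (hjn : j ≤ n) (r : ℤ) :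
    BP n j r = BP n ((n : ℤ) + 1 - j) ((n : ℤ) - 1 - r) := by
  have hn1 : 1 ≤ n := by omega
  have hmem : (n : ℕ) ∈ Finset.Icc 1 n := Finset.mem_Icc.mpr (by omega)
  have h1mem : (1 : ℕ) ∈ Finset.Icc 1 n := Finset.mem_Icc.mpr (by omega)
  apply Nat.card_congr
  refine ⟨fun ⟨σ, h⟩ => ⟨dPerm σ, ?_⟩, fun ⟨σ, h⟩ => ⟨dPerm σ, ?_⟩,
    fun ⟨σ, h⟩ => Subtype.ext (dPerm_dPerm σ), fun ⟨σ, h⟩ => Subtype.ext (dPerm_dPerm σ)⟩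
  · obtain ⟨hσn, hσ1, hσd⟩ := h
    have hb := sigma_bounds σ hmem
    have hpos1 : 0 < σ.toFun 1 := by rw [hσ1]; omega
    have hk := key σ hn1 hpos1 hσn
    refine ⟨?_, ?_, ?_⟩
    · show 0 < dd n (σ.toFun n)
      rw [dd_of_pos hσn]; omega
    · show dd n (σ.toFun 1) = (n : ℤ) + 1 - j
      rw [dd_of_pos hpos1, hσ1]
    · omega
  · obtain ⟨hσn, hσ1, hσd⟩ := h
    have hb := sigma_bounds σ hmem
    have hpos1 : 0 < σ.toFun 1 := by rw [hσ1]; omega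
    have hk := key σ hn1 hpos1 hσn
    refine ⟨?_, ?_, ?_⟩
    · show 0 < dd n (σ.toFun n)
      rw [dd_of_pos hσn]; omega
    · show dd n (σ.toFun 1) = j
      rw [dd_of_pos hpos1, hσ1]; ring
    · omega

lemma BP_neg (n : ℕ) (j : ℤ) : BP n j (-1) = 0 := by
  have : IsEmpty {σ : SignedPerm n // 0 < σ.toFun n ∧ σ.toFun 1 = j ∧ (desB σ : ℤ) = -1} := by
    constructor
    rintro ⟨σ, -, -, h⟩
    omega
  simp [BP]

lemma BPpoly_coeff (n : ℕ) (j : ℤ) {k : ℕ} (hk : k ≤ n) :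
    (BPpoly n j).coeff k = (BP n j (k : ℤ) : ℤ) := by
  rw [BPpoly]
  rw [Polynomial.finset_sum_coeff]
  simp only [Polynomial.coeff_C_mul, Polynomial.coeff_X_pow, mul_ite, mul_one, mul_zero]
  rw [Finset.sum_ite_eq (Finset.range (n+1)) k]
  simp [Nat.lt_succ_iff, hk]

lemma combined_coeff (n : ℕ) (j j' : ℤ) {k : ℕ} (hk : k ≤ n) :
    (Polynomial.X * BPpoly n j + BPpoly n j').coeff k =
      (BP n j ((k : ℤ) - 1) : ℤ) + (BP n j' (k : ℤ) : ℤ) := by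
  rw [Polynomial.coeff_add]
  cases k with
  | zero =>
      simp [Polynomial.mul_coeff_zero, BPpoly_coeff n j' (Nat.zero_le n), BP_neg]
  | succ s =>
      rw [Polynomial.coeff_X_mul, BPpoly_coeff n j (by omega : s ≤ n),
        BPpoly_coeff n j' hk]
      push_cast
      ring_nf

end Aux

/-- For `1 ≤ j < (n+1)/2`, the polynomial
`B̃^+_{n,j}(t) = t ⋅ B^+_{n,j}(t) + B^+_{n,n-j+1}(t)` is symmetric with center
`⌊n/2⌋`: its coefficient of `t^k` equals its coefficient of `t^{n-k}`. -/
theorem stmt17 (n j : ℕ) (hj1 : 1 ≤ j) (hj : 2 * j < n + 1) :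
    ∀ k ≤ n,
      (Polynomial.X * BPpoly n (j : ℤ) + BPpoly n ((n : ℤ) - j + 1)).coeff k =
      (Polynomial.X * BPpoly n (j : ℤ) + BPpoly n ((n : ℤ) - j + 1)).coeff (n - k) := by
  intro k hk
  have hj1' : (1 : ℤ) ≤ (j : ℤ) := by exact_mod_cast hj1
  have hjn : (j : ℤ) ≤ (n : ℤ) := by omega
  rw [combined_coeff n (j : ℤ) ((n : ℤ) - j + 1) hk,
    combined_coeff n (j : ℤ) ((n : ℤ) - j + 1) (Nat.sub_le n k)]
  have hc : ((n - k : ℕ) : ℤ) = (n : ℤ) - k := by omega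
  rw [hc]
  have h1 := BP_symm n (j : ℤ) hj1' hjn ((k : ℤ) - 1)
  have h2 := BP_symm n ((n : ℤ) + 1 - j) (by omega) (by omega) (k : ℤ)
  ring_nf at h1 h2 ⊢
  omega
end
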